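/- arXiv:0906.2943 — 5 statements merged into one kernel-verified Lean document; each statement's English description precedes it below -/
import Mathlib

section
/- Let D ⊆ ℂ and m : D → [0,∞). Then ‖·‖_m is a norm on R_m(H), and the normed space (R_m(H), ‖·‖_m) is complete, i.e. a Banach space. -/
/-!
The admissible majorant constants of a fixed `F` form a closed set, so the least one is attained,
and the admissible constants of `F + G` and `c • F` contain `a + b` and `‖c‖ a`. For a fixed
constant, the `F` admitting it form a closed subset of `H`, because point evaluations are
continuous; hence closed `‖·‖_m`-balls are closed in `H`. An `‖·‖_m`-Cauchy sequence is Cauchy in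
`H`, and its `H`-limit lies in every `‖·‖_m`-ball around the tail of the sequence.
-/
open Complex Filter Topology

noncomputable section

/-- The set `R_m(H)`: elements of `H` such that both `F` and `F^#` are dominated by a
multiple of the majorant `m` on `D`.  Here `ev` realizes elements of `H` as entire
functions. -/
def RmSet {H : Type*} [NormedAddCommGroup H] [InnerProductSpace ℂ H]
    (ev : H →ₗ[ℂ] (ℂ → ℂ)) (D : Set ℂ) (m : ℂ → ℝ) : Set H :=
  {F | ∃ C : ℝ, 0 ≤ C ∧ ∀ z ∈ D,
      ‖ev F z‖ ≤ C * m z ∧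
      ‖(starRingEnd ℂ) (ev F ((starRingEnd ℂ) z))‖ ≤ C * m z}

/-- The norm `‖F‖_m = max(‖F‖_H, min{C ≥ 0 : |F(z)|,|F^#(z)| ≤ C m(z), z ∈ D})`. -/
def mnorm {H : Type*} [NormedAddCommGroup H] [InnerProductSpace ℂ H]
    (ev : H →ₗ[ℂ] (ℂ → ℂ)) (D : Set ℂ) (m : ℂ → ℝ) (F : H) : ℝ :=
  max ‖F‖ (sInf {C : ℝ | 0 ≤ C ∧ ∀ z ∈ D,
      ‖ev F z‖ ≤ C * m z ∧
      ‖(starRingEnd ℂ) (ev F ((starRingEnd ℂ) z))‖ ≤ C * m z})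

open ComplexConjugate Pointwise

section Bounds

variable {H : Type*} [AddCommGroup H] [Module ℂ H]
  (ev : H →ₗ[ℂ] (ℂ → ℂ)) (D : Set ℂ) (m : ℂ → ℝ)

-- Since `‖conj w‖ = ‖w‖`, the bound on `F^#` at `z` is recorded as a bound on `F` at `conj z`.
def rmBounds (F : H) : Set ℝ :=
  {C | 0 ≤ C ∧ ∀ z ∈ D, ‖ev F z‖ ≤ C * m z ∧ ‖ev F (conj z)‖ ≤ C * m z}

variable {ev D m}

lemma nonneg_of_mem_rmBounds {F : H} {C : ℝ} (hC : C ∈ rmBounds ev D m F) : 0 ≤ C := hC.1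

lemma bddBelow_rmBounds (F : H) : BddBelow (rmBounds ev D m F) :=
  ⟨0, fun _ => nonneg_of_mem_rmBounds⟩

lemma isClosed_rmBounds (F : H) : IsClosed (rmBounds ev D m F) := by
  have h : rmBounds ev D m F = Set.Ici 0 ∩ ⋂ z ∈ D,
      {C : ℝ | ‖ev F z‖ ≤ C * m z} ∩ {C : ℝ | ‖ev F (conj z)‖ ≤ C * m z} := by
    ext C
    simp only [rmBounds, Set.mem_ofPred_eq, Set.mem_inter_iff, Set.mem_Ici, Set.mem_iInter]
  rw [h]
  refine isClosed_Ici.inter (isClosed_biInter fun z _ => IsClosed.inter ?_ ?_) <;>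
    exact isClosed_le continuous_const (continuous_id.mul continuous_const)

lemma csInf_mem_rmBounds {F : H} (h : (rmBounds ev D m F).Nonempty) :
    sInf (rmBounds ev D m F) ∈ rmBounds ev D m F :=
  (isClosed_rmBounds F).csInf_mem h (bddBelow_rmBounds F)

lemma mem_rmBounds_of_le (hm : ∀ z ∈ D, 0 ≤ m z) {F : H} {C C' : ℝ}
    (hC : C ∈ rmBounds ev D m F) (hCC' : C ≤ C') : C' ∈ rmBounds ev D m F := by
  refine ⟨hC.1.trans hCC', fun z hz => ?_⟩
  have hmono : C * m z ≤ C' * m z := mul_le_mul_of_nonneg_right hCC' (hm z hz)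
  exact ⟨(hC.2 z hz).1.trans hmono, (hC.2 z hz).2.trans hmono⟩

lemma zero_mem_rmBounds_zero : (0 : ℝ) ∈ rmBounds ev D m (0 : H) :=
  ⟨le_rfl, fun z _ => by simp⟩

lemma sInf_rmBounds_zero : sInf (rmBounds ev D m (0 : H)) = 0 :=
  le_antisymm (csInf_le (bddBelow_rmBounds 0) zero_mem_rmBounds_zero)
    (le_csInf ⟨0, zero_mem_rmBounds_zero⟩ fun _ => nonneg_of_mem_rmBounds)

lemma add_mem_rmBounds_add {F G : H} {a b : ℝ} (ha : a ∈ rmBounds ev D m F)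
    (hb : b ∈ rmBounds ev D m G) : a + b ∈ rmBounds ev D m (F + G) := by
  refine ⟨add_nonneg ha.1 hb.1, fun z hz => ?_⟩
  simp only [map_add, Pi.add_apply, add_mul]
  exact ⟨(norm_add_le _ _).trans (add_le_add (ha.2 z hz).1 (hb.2 z hz).1),
    (norm_add_le _ _).trans (add_le_add (ha.2 z hz).2 (hb.2 z hz).2)⟩

lemma norm_mul_mem_rmBounds_smul (c : ℂ) {F : H} {a : ℝ} (ha : a ∈ rmBounds ev D m F) :
    ‖c‖ * a ∈ rmBounds ev D m (c • F) := by
  refine ⟨mul_nonneg (norm_nonneg c) ha.1, fun z hz => ?_⟩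
  simp only [map_smul, Pi.smul_apply, smul_eq_mul, norm_mul, mul_assoc]
  exact ⟨mul_le_mul_of_nonneg_left (ha.2 z hz).1 (norm_nonneg c),
    mul_le_mul_of_nonneg_left (ha.2 z hz).2 (norm_nonneg c)⟩

lemma rmBounds_smul {c : ℂ} (hc : c ≠ 0) (F : H) :
    rmBounds ev D m (c • F) = ‖c‖ • rmBounds ev D m F := by
  ext C
  refine ⟨fun hC => ⟨‖c‖⁻¹ * C, ?_, ?_⟩, ?_⟩
  · simpa [smul_smul, hc] using norm_mul_mem_rmBounds_smul c⁻¹ hC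
  · simp [hc]
  · rintro ⟨a, ha, rfl⟩
    exact norm_mul_mem_rmBounds_smul c ha

lemma sInf_rmBounds_smul (c : ℂ) (F : H) :
    sInf (rmBounds ev D m (c • F)) = ‖c‖ * sInf (rmBounds ev D m F) := by
  rcases eq_or_ne c 0 with rfl | hc
  · simp [sInf_rmBounds_zero]
  · rw [rmBounds_smul hc, Real.sInf_smul_of_nonneg (norm_nonneg c), smul_eq_mul]

lemma isClosed_setOf_mem_rmBounds [TopologicalSpace H]
    (heval : ∀ w : ℂ, Continuous fun F : H => ev F w) (C : ℝ) :
    IsClosed {F : H | C ∈ rmBounds ev D m F} := by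
  have h : {F : H | C ∈ rmBounds ev D m F} = {_F | 0 ≤ C} ∩ ⋂ z ∈ D,
      {F | ‖ev F z‖ ≤ C * m z} ∩ {F | ‖ev F (conj z)‖ ≤ C * m z} := by
    ext F
    simp only [rmBounds, Set.mem_ofPred_eq, Set.mem_inter_iff, Set.mem_iInter]
  rw [h]
  refine isClosed_const.inter (isClosed_biInter fun z _ => IsClosed.inter ?_ ?_) <;>
    exact isClosed_le (heval _).norm continuous_const

end Bounds

section RmSet

variable {H : Type*} [NormedAddCommGroup H] [InnerProductSpace ℂ H]
  {ev : H →ₗ[ℂ] (ℂ → ℂ)} {D : Set ℂ} {m : ℂ → ℝ}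

lemma mem_rmSet_iff {F : H} : F ∈ RmSet ev D m ↔ (rmBounds ev D m F).Nonempty := by
  simp only [RmSet, rmBounds, Set.mem_ofPred_eq, Set.Nonempty, Complex.norm_conj]

lemma mnorm_eq (F : H) : mnorm ev D m F = max ‖F‖ (sInf (rmBounds ev D m F)) := by
  simp only [mnorm, rmBounds, Complex.norm_conj]

lemma norm_le_mnorm (F : H) : ‖F‖ ≤ mnorm ev D m F :=
  (mnorm_eq F).symm ▸ le_max_left _ _

lemma mnorm_nonneg (F : H) : 0 ≤ mnorm ev D m F :=
  (norm_nonneg F).trans (norm_le_mnorm F)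

lemma mnorm_zero : mnorm ev D m (0 : H) = 0 := by
  rw [mnorm_eq, norm_zero, sInf_rmBounds_zero, max_self]

lemma mnorm_eq_zero_iff {F : H} : mnorm ev D m F = 0 ↔ F = 0 :=
  ⟨fun h => norm_le_zero_iff.1 (h ▸ norm_le_mnorm F), fun h => h ▸ mnorm_zero⟩

lemma add_mem_rmSet {F G : H} (hF : F ∈ RmSet ev D m) (hG : G ∈ RmSet ev D m) :
    F + G ∈ RmSet ev D m := by
  obtain ⟨a, ha⟩ := mem_rmSet_iff.1 hF
  obtain ⟨b, hb⟩ := mem_rmSet_iff.1 hG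
  exact mem_rmSet_iff.2 ⟨a + b, add_mem_rmBounds_add ha hb⟩

lemma mnorm_add_le {F G : H} (hF : F ∈ RmSet ev D m) (hG : G ∈ RmSet ev D m) :
    mnorm ev D m (F + G) ≤ mnorm ev D m F + mnorm ev D m G := by
  have hsum := add_mem_rmBounds_add (csInf_mem_rmBounds (mem_rmSet_iff.1 hF))
    (csInf_mem_rmBounds (mem_rmSet_iff.1 hG))
  simp only [mnorm_eq]
  exact max_le ((norm_add_le F G).trans (add_le_add (le_max_left _ _) (le_max_left _ _)))
    ((csInf_le (bddBelow_rmBounds _) hsum).trans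
      (add_le_add (le_max_right _ _) (le_max_right _ _)))

lemma smul_mem_rmSet (c : ℂ) {F : H} (hF : F ∈ RmSet ev D m) : c • F ∈ RmSet ev D m := by
  obtain ⟨a, ha⟩ := mem_rmSet_iff.1 hF
  exact mem_rmSet_iff.2 ⟨_, norm_mul_mem_rmBounds_smul c ha⟩

lemma mnorm_smul (c : ℂ) (F : H) : mnorm ev D m (c • F) = ‖c‖ * mnorm ev D m F := by
  rw [mnorm_eq, mnorm_eq, norm_smul, sInf_rmBounds_smul, mul_max_of_nonneg _ _ (norm_nonneg c)]

lemma sub_mem_rmSet {F G : H} (hF : F ∈ RmSet ev D m) (hG : G ∈ RmSet ev D m) :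
    F - G ∈ RmSet ev D m := by
  simpa [sub_eq_add_neg] using add_mem_rmSet hF (smul_mem_rmSet (-1) hG)

lemma mnorm_le_iff (hm : ∀ z ∈ D, 0 ≤ m z) {F : H} (hF : F ∈ RmSet ev D m) {ε : ℝ} :
    mnorm ev D m F ≤ ε ↔ ‖F‖ ≤ ε ∧ ε ∈ rmBounds ev D m F := by
  rw [mnorm_eq, max_le_iff]
  refine and_congr_right fun _ => ⟨fun h => ?_, csInf_le (bddBelow_rmBounds F)⟩
  exact mem_rmBounds_of_le hm (csInf_mem_rmBounds (mem_rmSet_iff.1 hF)) h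

end RmSet

section Completeness

variable {H : Type*} [NormedAddCommGroup H] [InnerProductSpace ℂ H]
  {ev : H →ₗ[ℂ] (ℂ → ℂ)} {D : Set ℂ} {m : ℂ → ℝ}

lemma mem_rmSet_and_mnorm_le_of_tendsto (heval : ∀ w : ℂ, Continuous fun F : H => ev F w)
    (hm : ∀ z ∈ D, 0 ≤ m z) {ι : Type*} {l : Filter ι} [l.NeBot] {x : ι → H} {y : H}
    (hx : Tendsto x l (𝓝 y)) {ε : ℝ}
    (hε : ∀ᶠ i in l, x i ∈ RmSet ev D m ∧ mnorm ev D m (x i) ≤ ε) :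
    y ∈ RmSet ev D m ∧ mnorm ev D m y ≤ ε := by
  have hclosed : IsClosed {F : H | ‖F‖ ≤ ε ∧ ε ∈ rmBounds ev D m F} :=
    (isClosed_le continuous_norm continuous_const).inter (isClosed_setOf_mem_rmBounds heval ε)
  have hy := hclosed.mem_of_tendsto hx (hε.mono fun i hi => (mnorm_le_iff hm hi.1).1 hi.2)
  have hyR : y ∈ RmSet ev D m := mem_rmSet_iff.2 ⟨ε, hy.2⟩
  exact ⟨hyR, (mnorm_le_iff hm hyR).2 hy⟩

theorem exists_mnorm_sub_lt_of_cauchy [CompleteSpace H]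
    (heval : ∀ w : ℂ, Continuous fun F : H => ev F w) (hm : ∀ z ∈ D, 0 ≤ m z)
    {u : ℕ → H} (hu : ∀ n, u n ∈ RmSet ev D m)
    (hcau : ∀ ε : ℝ, 0 < ε → ∃ N : ℕ, ∀ p ≥ N, ∀ q ≥ N, mnorm ev D m (u p - u q) < ε) :
    ∃ F ∈ RmSet ev D m, ∀ ε : ℝ, 0 < ε → ∃ N : ℕ, ∀ n ≥ N, mnorm ev D m (u n - F) < ε := by
  have hcauchy : CauchySeq u := Metric.cauchySeq_iff.2 fun ε hε =>
    (hcau ε hε).imp fun N hN p hp q hq =>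
      (dist_eq_norm (u p) (u q)).trans_le (norm_le_mnorm _) |>.trans_lt (hN p hp q hq)
  obtain ⟨F, hF⟩ := cauchySeq_tendsto_of_complete hcauchy
  have hclose : ∀ ε : ℝ, 0 < ε → ∃ N : ℕ, ∀ p ≥ N,
      u p - F ∈ RmSet ev D m ∧ mnorm ev D m (u p - F) ≤ ε := fun ε hε => by
    obtain ⟨N, hN⟩ := hcau ε hε
    exact ⟨N, fun p hp => mem_rmSet_and_mnorm_le_of_tendsto heval hm
      (tendsto_const_nhds.sub hF) (eventually_atTop.2
        ⟨N, fun q hq => ⟨sub_mem_rmSet (hu p) (hu q), (hN p hp q hq).le⟩⟩)⟩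
  obtain ⟨N, hN⟩ := hclose 1 one_pos
  refine ⟨F, by simpa using sub_mem_rmSet (hu N) (hN N le_rfl).1, fun ε hε => ?_⟩
  obtain ⟨N, hN⟩ := hclose (ε / 2) (half_pos hε)
  exact ⟨N, fun n hn => (hN n hn).2.trans_lt (half_lt_self hε)⟩

end Completeness

theorem rmSet_mnorm_is_complete_norm_general
    {H : Type*} [NormedAddCommGroup H] [InnerProductSpace ℂ H] [CompleteSpace H]
    (ev : H →ₗ[ℂ] (ℂ → ℂ))
    (heval : ∀ w : ℂ, Continuous fun F : H => ev F w)
    (D : Set ℂ) (m : ℂ → ℝ) (hm : ∀ z ∈ D, 0 ≤ m z) :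
    -- `R_m(H)` is closed under addition and `‖·‖_m` is subadditive
    (∀ F ∈ RmSet ev D m, ∀ G ∈ RmSet ev D m,
        F + G ∈ RmSet ev D m ∧
        mnorm ev D m (F + G) ≤ mnorm ev D m F + mnorm ev D m G) ∧
    -- `R_m(H)` is closed under scalar multiplication and `‖·‖_m` is homogeneous
    (∀ F ∈ RmSet ev D m, ∀ c : ℂ,
        c • F ∈ RmSet ev D m ∧
        mnorm ev D m (c • F) = ‖c‖ * mnorm ev D m F) ∧
    -- `‖·‖_m` is nonnegative and definite
    (∀ F ∈ RmSet ev D m, 0 ≤ mnorm ev D m F ∧ (mnorm ev D m F = 0 ↔ F = 0)) ∧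
    -- completeness: every `‖·‖_m`-Cauchy sequence in `R_m(H)` converges in `R_m(H)`
    (∀ u : ℕ → H, (∀ n, u n ∈ RmSet ev D m) →
        (∀ ε : ℝ, 0 < ε → ∃ N : ℕ, ∀ p ≥ N, ∀ q ≥ N, mnorm ev D m (u p - u q) < ε) →
        ∃ F ∈ RmSet ev D m, ∀ ε : ℝ, 0 < ε → ∃ N : ℕ, ∀ n ≥ N,
          mnorm ev D m (u n - F) < ε) :=
  ⟨fun _ hF _ hG => ⟨add_mem_rmSet hF hG, mnorm_add_le hF hG⟩,
    fun F hF c => ⟨smul_mem_rmSet c hF, mnorm_smul c F⟩,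
    fun F _ => ⟨mnorm_nonneg F, mnorm_eq_zero_iff⟩,
    fun _ hu hcau => exists_mnorm_sub_lt_of_cauchy heval hm hu hcau⟩

/-- `‖·‖_m` is a norm on `R_m(H)` and `(R_m(H), ‖·‖_m)` is complete. -/
theorem rmSet_mnorm_is_complete_norm
    {H : Type*} [NormedAddCommGroup H] [InnerProductSpace ℂ H] [CompleteSpace H]
    (ev : H →ₗ[ℂ] (ℂ → ℂ)) (hinj : Function.Injective ev)
    (hentire : ∀ F : H, Differentiable ℂ (ev F))
    (heval : ∀ w : ℂ, Continuous fun F : H => ev F w)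
    (hsharp : ∀ F : H, ∃ G : H,
      (∀ z : ℂ, ev G z = (starRingEnd ℂ) (ev F ((starRingEnd ℂ) z))) ∧ ‖G‖ = ‖F‖)
    (D : Set ℂ) (m : ℂ → ℝ) (hm : ∀ z ∈ D, 0 ≤ m z) :
    -- `R_m(H)` is closed under addition and `‖·‖_m` is subadditive
    (∀ F ∈ RmSet ev D m, ∀ G ∈ RmSet ev D m,
        F + G ∈ RmSet ev D m ∧
        mnorm ev D m (F + G) ≤ mnorm ev D m F + mnorm ev D m G) ∧
    -- `R_m(H)` is closed under scalar multiplication and `‖·‖_m` is homogeneous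
    (∀ F ∈ RmSet ev D m, ∀ c : ℂ,
        c • F ∈ RmSet ev D m ∧
        mnorm ev D m (c • F) = ‖c‖ * mnorm ev D m F) ∧
    -- `‖·‖_m` is nonnegative and definite
    (∀ F ∈ RmSet ev D m, 0 ≤ mnorm ev D m F ∧ (mnorm ev D m F = 0 ↔ F = 0)) ∧
    -- completeness: every `‖·‖_m`-Cauchy sequence in `R_m(H)` converges in `R_m(H)`
    (∀ u : ℕ → H, (∀ n, u n ∈ RmSet ev D m) →
        (∀ ε : ℝ, 0 < ε → ∃ N : ℕ, ∀ p ≥ N, ∀ q ≥ N, mnorm ev D m (u p - u q) < ε) →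
        ∃ F ∈ RmSet ev D m, ∀ ε : ℝ, 0 < ε → ∃ N : ℕ, ∀ n ≥ N,
          mnorm ev D m (u n - F) < ε) :=
  rmSet_mnorm_is_complete_norm_general ev heval D m hm
end
end

section
/- Let D ⊆ {z ∈ ℂ : Im z ≥ 0} and m : D → [0,∞), and assume R_m(H) ≠ {0}. Then there exists F ∈ R_m(H), F ≠ 0, such that mt_H(F) = sup{ mt_H(G) : G ∈ R_m(H), G ≠ 0 } (the supremum of mean types over R_m(H) is attained). -/
open Complex Filter Topology

noncomputable section

open scoped InnerProductSpace

/-- The mean type of `F` relative to `H = H(E)`: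
`mt_H(F) = limsup_{y → ∞} log(|F(iy)|/|E(iy)|)/y`, an extended real number. -/
def meanType {H : Type*} [NormedAddCommGroup H] [InnerProductSpace ℂ H]
    (ev : H →ₗ[ℂ] (ℂ → ℂ)) (E : ℂ → ℂ) (F : H) : EReal :=
  Filter.limsup
    (fun y : ℝ =>
      ((Real.log (‖ev F ((y : ℂ) * Complex.I)‖ /
          ‖E ((y : ℂ) * Complex.I)‖) / y : ℝ) : EReal))
    Filter.atTop

/-!
If the supremum `s` of the mean types over `R_m(H) \ {0}` were not attained, we could build an
element of `R_m(H) \ {0}` of mean type `≥ s`. All mean types are `≤ 0`, since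
`|F(iy)| ≤ ‖F‖ ‖K_{iy}‖ ≤ ‖F‖ |E(iy)| / √(4πy)`; so `s` is a real number `σ` and there are
`G_j ∈ R_m(H)` with `mt(G_j) > σ - 1/(j+1)`, i.e. with arbitrarily large `y` such that
`|G_j(iy)| > e^{(σ - 1/(j+1)) y} |E(iy)|`.

Put `F = ∑ c_j G_j`, choosing `c_j` and a height `y_j` greedily. The bound
`|G_k(iy)| ≤ ‖G_k‖ ‖K_{iy}‖` lets a single smallness condition on `c_k` make the term `c_k G_k`
negligible at all earlier heights `y_j`, and also makes the series converge in `H` and in the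
`R_m` bound. Of the two candidates `c_j` and `c_j / 2`, one does not cancel against the partial
sum at `y_j`. Hence `|F(iy_j)| ≥ (c_j / 8) |G_j(iy_j)|`, and since `y_j` is chosen after the size
of `c_j`, `log c_j = o(y_j)` and `mt(F) ≥ σ`.
-/

theorem lt_log_div_div_iff {a b y r : ℝ} (hy : 0 < y) (ha : 0 < a) (hb : 0 < b) :
    r < Real.log (a / b) / y ↔ Real.exp (r * y) * b < a := by
  rw [lt_div_iff₀ hy, Real.lt_log_iff_exp_lt (div_pos ha hb), lt_div_iff₀ hb]

theorem le_limsup_of_tendsto_of_le {α β : Type*} [CompleteLinearOrder β] [TopologicalSpace β]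
    [OrderTopology β] {f : Filter α} {u : α → β} {y : ℕ → α} (hy : Tendsto y atTop f)
    {a : ℕ → β} {b : β} (ha : Tendsto a atTop (𝓝 b)) (hle : ∀ i, a i ≤ u (y i)) :
    b ≤ limsup u f :=
  calc b = limsup a atTop := ha.limsup_eq.symm
    _ ≤ limsup (u ∘ y) atTop := limsup_le_limsup (Eventually.of_forall hle)
    _ ≤ limsup u f := hy.limsup_comp_le_limsup

theorem Nat.exists_seq_of_forall_exists {α : Type*} (p : ℕ → α → Prop) (r : ℕ → α → α → Prop)
    {a₀ : α} (h₀ : p 0 a₀) (h : ∀ n a, p n a → ∃ b, p (n + 1) b ∧ r n a b) :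
    ∃ f : ℕ → α, f 0 = a₀ ∧ ∀ n, p n (f n) ∧ r n (f n) (f (n + 1)) := by
  choose! g hg using h
  let f : ℕ → α := fun n => Nat.rec a₀ g n
  have hp : ∀ n, p n (f n) := fun n => Nat.rec h₀ (fun n ih => (hg n _ ih).1) n
  exact ⟨f, rfl, fun n => ⟨hp n, (hg n _ (hp n)).2⟩⟩

theorem norm_sum_range_sub_le_norm_tsum {V : Type*} [NormedAddCommGroup V] [CompleteSpace V]
    {a : ℕ → V} (ha : Summable a) (j : ℕ) {A : ℝ} (htail : ∀ k, ‖a (k + (j + 1))‖ ≤ A / 2 / 2 ^ k) :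
    ‖∑ i ∈ Finset.range (j + 1), a i‖ - A ≤ ‖∑' i, a i‖ := by
  rw [← ha.sum_add_tsum_nat_add (j + 1)]
  have h₁ := tsum_of_norm_bounded (hasSum_geometric_two' A) htail
  have h₂ := norm_sub_norm_le (∑ i ∈ Finset.range (j + 1), a i) (-∑' k, a (k + (j + 1)))
  rw [norm_neg, sub_neg_eq_add] at h₂
  linarith

section Greedy

variable {V : Type*} [NormedAddCommGroup V] [NormedSpace ℝ V]

theorem exists_le_norm_add_smul (a b : V) {t : ℝ} (ht : 0 ≤ t) :
    ∃ c, t / 2 ≤ c ∧ c ≤ t ∧ t / 4 * ‖b‖ ≤ ‖a + c • b‖ := by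
  by_contra! h
  have h₁ := h t (by linarith) le_rfl
  have h₂ := h (t / 2) le_rfl (by linarith)
  have h₃ := norm_sub_le (a + t • b) (a + (t / 2) • b)
  rw [show a + t • b - (a + (t / 2) • b) = (t / 2) • b by module, norm_smul,
    Real.norm_of_nonneg (by linarith)] at h₃
  linarith

theorem exists_coeff_height (f S : ℝ → V) {Q : ℝ → Prop} (hQ : ∃ᶠ y in atTop, Q y ∧ f y ≠ 0)
    {δ ε : ℝ} (hδ : 0 < δ) (hε : 0 < ε) (y₀ : ℝ) :
    ∃ c y, 0 < c ∧ c ≤ ε ∧ y₀ ≤ y ∧ Q y ∧ f y ≠ 0 ∧ Real.exp (-(δ * y)) ≤ c / 8 ∧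
      c / 4 * ‖f y‖ ≤ ‖S y + c • f y‖ := by
  obtain ⟨y, hy, hQy, hfy⟩ := frequently_atTop.1 hQ (max y₀ (-Real.log (ε / 16) / δ))
  obtain ⟨c, hc₁, hc₂, hc⟩ := exists_le_norm_add_smul (S y) (f y) hε.le
  have hlog : -(δ * y) ≤ Real.log (ε / 16) := by
    have := (div_le_iff₀ hδ).1 (le_of_max_le_right hy)
    linarith
  refine ⟨c, y, by linarith, hc₂, le_of_max_le_left hy, hQy, hfy, ?_, ?_⟩
  · calc Real.exp (-(δ * y)) ≤ Real.exp (Real.log (ε / 16)) := Real.exp_le_exp.2 hlog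
      _ = ε / 16 := Real.exp_log (by positivity)
      _ ≤ c / 8 := by linarith
  · calc c / 4 * ‖f y‖ ≤ ε / 4 * ‖f y‖ := by gcongr
      _ ≤ ‖S y + c • f y‖ := hc

variable (φ : ℕ → ℝ → V) (w : ℝ → ℝ) (β δ : ℕ → ℝ) (P : ℕ → ℝ → Prop)

/-- The state `p = (S, m)` before step `j` holds the partial sum `S = ∑_{i<j} c_i • φ_i` and
`m = min (1, min_{i<j} c_i ‖φ_i(y_i)‖ / (8 w(y_i)))`; the bound `c_j (1 + β_j) ≤ 2^{-j} m` then
makes `c_j • φ_j` negligible at every earlier height `y_i` as soon as `‖φ_j‖ ≤ β_j w`. -/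
def GreedyStep (j : ℕ) (p q : (ℝ → V) × ℝ) : Prop :=
  ∃ c y, 0 < c ∧ c ≤ (1 / 2) ^ j * p.2 / (1 + β j) ∧ (j : ℝ) + 1 ≤ y ∧ P j y ∧ φ j y ≠ 0 ∧
    Real.exp (-(δ j * y)) ≤ c / 8 ∧ c / 4 * ‖φ j y‖ ≤ ‖p.1 y + c • φ j y‖ ∧
    q = (p.1 + c • φ j, min p.2 (c * ‖φ j y‖ / (8 * w y)))

variable {φ w β δ P}

theorem exists_greedyStep (hβ : ∀ i, 0 ≤ β i) (hφ : ∀ i t, ‖φ i t‖ ≤ β i * w t)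
    (hδ : ∀ i, 0 < δ i) (hP : ∀ i, ∃ᶠ t in atTop, P i t ∧ φ i t ≠ 0) (j : ℕ)
    (p : (ℝ → V) × ℝ) (hp : 0 < p.2) : ∃ q, 0 < q.2 ∧ GreedyStep φ w β δ P j p q := by
  obtain ⟨c, y, hc, hcle, hy, hPy, hne, hexp, hpart⟩ := exists_coeff_height (φ j) p.1 (hP j)
    (hδ j) (ε := (1 / 2) ^ j * p.2 / (1 + β j)) (by have := hβ j; positivity) ((j : ℝ) + 1)
  have hw : 0 < w y := pos_of_mul_pos_right ((norm_pos_iff.2 hne).trans_le (hφ j y)) (hβ j)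
  have hκ : 0 < c * ‖φ j y‖ / (8 * w y) := by
    have := norm_pos_iff.2 hne
    positivity
  exact ⟨_, lt_min hp hκ, c, y, hc, hcle, hy, hPy, hne, hexp, hpart, rfl⟩

theorem le_norm_tsum_greedy [CompleteSpace V] (hφ : ∀ i t, ‖φ i t‖ ≤ β i * w t)
    {c y m : ℕ → ℝ} (hc : ∀ i, 0 ≤ c i) (hcβ : ∀ i, c i * β i ≤ (1 / 2) ^ i * m i)
    (hm : Antitone m) (hm₀ : ∀ i, 0 ≤ m i) (j : ℕ) (hw : 0 ≤ w (y j))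
    (hmw : m (j + 1) * w (y j) ≤ c j * ‖φ j (y j)‖ / 8)
    (hpart : c j / 4 * ‖φ j (y j)‖ ≤ ‖∑ i ∈ Finset.range (j + 1), c i • φ i (y j)‖) :
    c j / 8 * ‖φ j (y j)‖ ≤ ‖∑' i, c i • φ i (y j)‖ := by
  have hterm : ∀ i, ‖c i • φ i (y j)‖ ≤ (1 / 2) ^ i * m i * w (y j) := fun i =>
    calc ‖c i • φ i (y j)‖ = c i * ‖φ i (y j)‖ := by rw [norm_smul, Real.norm_of_nonneg (hc i)]
      _ ≤ c i * (β i * w (y j)) := mul_le_mul_of_nonneg_left (hφ i _) (hc i)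
      _ = c i * β i * w (y j) := by ring
      _ ≤ (1 / 2) ^ i * m i * w (y j) := mul_le_mul_of_nonneg_right (hcβ i) hw
  have hsum : Summable fun i => c i • φ i (y j) :=
    (summable_geometric_two.mul_right (m 0 * w (y j))).of_norm_bounded fun i =>
      (hterm i).trans <| by rw [mul_assoc]; gcongr; exact hm (Nat.zero_le i)
  have htail := norm_sum_range_sub_le_norm_tsum hsum j (A := c j * ‖φ j (y j)‖ / 8) fun k =>
    calc ‖c (k + (j + 1)) • φ (k + (j + 1)) (y j)‖
        ≤ (1 / 2) ^ (k + (j + 1)) * m (k + (j + 1)) * w (y j) := hterm _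
      _ ≤ (1 / 2) ^ (k + 1) * m (j + 1) * w (y j) := by
        have hpow : (1 / 2 : ℝ) ^ (k + (j + 1)) ≤ (1 / 2) ^ (k + 1) :=
          pow_le_pow_of_le_one (by norm_num) (by norm_num) (by omega)
        exact mul_le_mul_of_nonneg_right
          (mul_le_mul hpow (hm (by omega)) (hm₀ _) (by positivity)) hw
      _ ≤ (1 / 2) ^ (k + 1) * (c j * ‖φ j (y j)‖ / 8) := by rw [mul_assoc]; gcongr
      _ = c j * ‖φ j (y j)‖ / 8 / 2 / 2 ^ k := by simp only [one_div, inv_pow, pow_succ]; ring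
  linarith

theorem exists_greedy_coeffs_heights [CompleteSpace V] (hβ : ∀ i, 0 ≤ β i)
    (hφ : ∀ i t, ‖φ i t‖ ≤ β i * w t) (hδ : ∀ i, 0 < δ i)
    (hP : ∀ i, ∃ᶠ t in atTop, P i t ∧ φ i t ≠ 0) :
    ∃ c y : ℕ → ℝ, (∀ i, 0 < c i) ∧ (∀ i, c i * β i ≤ (1 / 2) ^ i) ∧
      (∀ i : ℕ, (i : ℝ) + 1 ≤ y i) ∧ (∀ i, P i (y i)) ∧
      ∀ j, Real.exp (-(δ j * y j)) * ‖φ j (y j)‖ ≤ ‖∑' i, c i • φ i (y j)‖ := by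
  obtain ⟨f, hf₀, hf⟩ := Nat.exists_seq_of_forall_exists (fun _ p => 0 < p.2)
    (GreedyStep φ w β δ P) (a₀ := (0, 1)) one_pos (exists_greedyStep hβ hφ hδ hP)
  choose c y hc hcle hy hP hne hexp hpart hnext using fun j => (hf j).2
  set m : ℕ → ℝ := fun j => (f j).2 with hm_def
  have hm_pos : ∀ j, 0 < m j := fun j => (hf j).1
  have hm_anti : Antitone m := antitone_nat_of_succ_le fun j => by
    simp only [hm_def, hnext j]
    exact min_le_left _ _
  have hcβ : ∀ i, c i * β i ≤ (1 / 2) ^ i * m i := fun i => by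
    have := (le_div_iff₀ (by linarith [hβ i])).1 (hcle i)
    nlinarith [hc i]
  have hw : ∀ j, 0 < w (y j) := fun j =>
    pos_of_mul_pos_right ((norm_pos_iff.2 (hne j)).trans_le (hφ j _)) (hβ j)
  have hmw : ∀ j, m (j + 1) * w (y j) ≤ c j * ‖φ j (y j)‖ / 8 := fun j =>
    calc m (j + 1) * w (y j) ≤ c j * ‖φ j (y j)‖ / (8 * w (y j)) * w (y j) := by
          refine mul_le_mul_of_nonneg_right ?_ (hw j).le
          simp only [hm_def, hnext j]
          exact min_le_right _ _
      _ = c j * ‖φ j (y j)‖ / 8 := by field_simp [(hw j).ne']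
  have hS : ∀ j, (f j).1 = fun t => ∑ i ∈ Finset.range j, c i • φ i t := fun j => by
    induction j with
    | zero => rw [hf₀]; funext t; simp
    | succ j ih => rw [hnext j, ih]; funext t; simp [Finset.sum_range_succ]
  refine ⟨c, y, hc, fun i => ?_, hy, hP, fun j => ?_⟩
  · have hm_le : m i ≤ 1 := by simpa [hm_def, hf₀] using hm_anti (Nat.zero_le i)
    calc c i * β i ≤ (1 / 2) ^ i * m i := hcβ i
      _ ≤ (1 / 2) ^ i := mul_le_of_le_one_right (by positivity) hm_le
  · calc Real.exp (-(δ j * y j)) * ‖φ j (y j)‖ ≤ c j / 8 * ‖φ j (y j)‖ := by gcongr; exact hexp j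
      _ ≤ ‖∑' i, c i • φ i (y j)‖ :=
        le_norm_tsum_greedy hφ (fun i => (hc i).le) hcβ hm_anti (fun i => (hm_pos i).le) j
          (hw j).le (hmw j) (by simpa [hS, Finset.sum_range_succ] using hpart j)

end Greedy

section DeBranges

variable {H : Type*} [NormedAddCommGroup H] [InnerProductSpace ℂ H] {ev : H →ₗ[ℂ] (ℂ → ℂ)}
  {E : ℂ → ℂ} {K : ℂ → H}
  (hKform : ∀ w z : ℂ, z ≠ (starRingEnd ℂ) w →
    ev (K w) z = (E z * (starRingEnd ℂ) (E w) -
        (starRingEnd ℂ) (E ((starRingEnd ℂ) z)) * E ((starRingEnd ℂ) w)) /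
      (2 * (Real.pi : ℂ) * Complex.I * ((starRingEnd ℂ) w - z)))
  (hrepro : ∀ (F : H) (w : ℂ), ⟪K w, F⟫_ℂ = ev F w)

theorem frequently_exp_mul_lt_of_lt_meanType {G : H} {r : ℝ} (hr : (r : EReal) < meanType ev E G)
    (hneg : meanType ev E G < 0) :
    ∃ᶠ y : ℝ in atTop, 0 < ‖E (y * I)‖ ∧ Real.exp (r * y) * ‖E (y * I)‖ < ‖ev G (y * I)‖ := by
  refine ((frequently_lt_of_lt_limsup (by isBoundedDefault) hr).and_eventually
    ((eventually_lt_of_limsup_lt hneg).and (eventually_gt_atTop 0))).mono ?_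
  rintro y ⟨hry, hneg, hy⟩
  have hry : r < Real.log (‖ev G (y * I)‖ / ‖E (y * I)‖) / y := mod_cast hry
  have hneg : Real.log (‖ev G (y * I)‖ / ‖E (y * I)‖) / y < 0 := mod_cast hneg
  -- `Real.log 0 = 0`, so a negative value rules out `G(iy) = 0` and `E(iy) = 0`
  have hq : ‖ev G (y * I)‖ / ‖E (y * I)‖ ≠ 0 := fun h => by simp [h] at hneg
  obtain ⟨hG, hE⟩ := div_ne_zero_iff.1 hq
  have hE := (norm_nonneg _).lt_of_ne' hE
  exact ⟨hE, (lt_log_div_div_iff hy ((norm_nonneg _).lt_of_ne' hG) hE).1 hry⟩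

theorem le_meanType_of_exp_mul_lt {F : H} {y : ℕ → ℝ} (hy : Tendsto y atTop atTop)
    (hy₀ : ∀ i, 0 < y i) {a : ℕ → ℝ} {σ : ℝ} (ha : Tendsto a atTop (𝓝 σ))
    (hE : ∀ i, 0 < ‖E (y i * I)‖)
    (hlt : ∀ i, Real.exp (a i * y i) * ‖E (y i * I)‖ < ‖ev F (y i * I)‖) :
    (σ : EReal) ≤ meanType ev E F :=
  le_limsup_of_tendsto_of_le hy (EReal.tendsto_coe.2 ha) fun i =>
    have hF : 0 < ‖ev F (y i * I)‖ := (by have := hE i; positivity : (0 : ℝ) < _).trans (hlt i)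
    EReal.coe_le_coe_iff.2 ((lt_log_div_div_iff (hy₀ i) hF (hE i)).2 (hlt i)).le

include hrepro

theorem norm_ev_le_norm_K_mul (F : H) (w : ℂ) : ‖ev F w‖ ≤ ‖K w‖ * ‖F‖ :=
  hrepro F w ▸ norm_inner_le_norm _ _

theorem ev_tsum {ι : Type*} {f : ι → H} (hf : Summable f) (w : ℂ) :
    ev (∑' i, f i) w = ∑' i, ev (f i) w := by
  simp only [← hrepro, ← innerSL_apply_apply]
  exact (innerSL ℂ (K w)).map_tsum hf

theorem tsum_mem_RmSet {ι : Type*} {D : Set ℂ} {m : ℂ → ℝ} {f : ι → H} (hf : Summable f)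
    {C : ι → ℝ} (hC : ∀ i, 0 ≤ C i) (hCs : Summable C)
    (hfC : ∀ i, ∀ z ∈ D, ‖ev (f i) z‖ ≤ C i * m z ∧
      ‖(starRingEnd ℂ) (ev (f i) ((starRingEnd ℂ) z))‖ ≤ C i * m z) :
    ∑' i, f i ∈ RmSet ev D m := by
  refine ⟨∑' i, C i, tsum_nonneg hC, fun z hz => ⟨?_, ?_⟩⟩ <;>
    simp only [Complex.norm_conj, ev_tsum hrepro hf] <;>
    refine tsum_of_norm_bounded (hCs.hasSum.mul_right (m z)) fun i => ?_
  · exact (hfC i z hz).1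
  · simpa only [Complex.norm_conj] using (hfC i z hz).2

theorem exists_mem_RmSet_le_meanType [CompleteSpace H] {D : Set ℂ} {m : ℂ → ℝ} {G : ℕ → H}
    (hG : ∀ j, G j ∈ RmSet ev D m) {r : ℕ → ℝ} {σ : ℝ} (hr : Tendsto r atTop (𝓝 σ))
    (hGr : ∀ j, (r j : EReal) < meanType ev E (G j)) (hGneg : ∀ j, meanType ev E (G j) < 0) :
    ∃ F ∈ RmSet ev D m, F ≠ 0 ∧ (σ : EReal) ≤ meanType ev E F := by
  choose C hC₀ hC using hG
  obtain ⟨c, y, hc, hcβ, hy, hP, hlow⟩ := exists_greedy_coeffs_heights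
    (φ := fun j t => ev (G j) (t * I)) (w := fun t => ‖K (t * I)‖) (δ := fun j => 1 / (j + 1))
    (P := fun j t => 0 < ‖E (t * I)‖ ∧ Real.exp (r j * t) * ‖E (t * I)‖ < ‖ev (G j) (t * I)‖)
    (fun j => add_nonneg (norm_nonneg (G j)) (hC₀ j))
    (fun j t => (norm_ev_le_norm_K_mul hrepro _ _).trans <| by
      rw [mul_comm]; gcongr; linarith [hC₀ j])
    (fun j => Nat.one_div_pos_of_nat)
    (fun j => (frequently_exp_mul_lt_of_lt_meanType (hGr j) (hGneg j)).mono fun t ht =>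
      ⟨ht, fun h => by rw [h, norm_zero] at ht; exact ht.2.not_ge (by positivity)⟩)
  have hsmul : ∀ i z, ‖ev (c i • G i) z‖ = c i * ‖ev (G i) z‖ := fun i z => by
    rw [LinearMap.map_smul_of_tower, Pi.smul_apply, norm_smul, Real.norm_of_nonneg (hc i).le]
  have hsum : Summable fun i => c i • G i := summable_geometric_two.of_norm_bounded fun i => by
    rw [norm_smul, Real.norm_of_nonneg (hc i).le]
    nlinarith [hcβ i, hc i, hC₀ i]
  set F := ∑' i, c i • G i
  have hlowF : ∀ j, Real.exp ((r j - 1 / (j + 1)) * y j) * ‖E (y j * I)‖ < ‖ev F (y j * I)‖ :=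
    fun j => calc
      _ = Real.exp (-(1 / (j + 1) * y j)) * (Real.exp (r j * y j) * ‖E (y j * I)‖) := by
        rw [← mul_assoc, ← Real.exp_add]; ring_nf
      _ < Real.exp (-(1 / (j + 1) * y j)) * ‖ev (G j) (y j * I)‖ :=
        mul_lt_mul_of_pos_left (hP j).2 (Real.exp_pos _)
      _ ≤ ‖∑' i, c i • ev (G i) (y j * I)‖ := hlow j
      _ = ‖ev F (y j * I)‖ := by
        rw [ev_tsum hrepro hsum]
        simp only [LinearMap.map_smul_of_tower, Pi.smul_apply]
  refine ⟨F, tsum_mem_RmSet hrepro hsum (C := fun i => c i * C i)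
    (fun i => mul_nonneg (hc i).le (hC₀ i))
    (summable_geometric_two.of_nonneg_of_le (fun i => mul_nonneg (hc i).le (hC₀ i))
      fun i => by nlinarith [hcβ i, hc i, norm_nonneg (G i)])
    fun i z hz => ⟨?_, ?_⟩, fun h0 => ?_, ?_⟩
  · rw [hsmul, mul_assoc]
    exact mul_le_mul_of_nonneg_left (hC i z hz).1 (hc i).le
  · rw [Complex.norm_conj, hsmul, mul_assoc, ← Complex.norm_conj]
    exact mul_le_mul_of_nonneg_left (hC i z hz).2 (hc i).le
  · have := hlowF 0
    rw [h0, map_zero, Pi.zero_apply, norm_zero] at this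
    exact this.not_ge (by positivity)
  · have hy₀ : ∀ i, 0 < y i := fun i => (by positivity : (0 : ℝ) < i + 1).trans_le (hy i)
    refine le_meanType_of_exp_mul_lt ?_ hy₀
      (by simpa using hr.sub tendsto_one_div_add_atTop_nhds_zero_nat) (fun j => (hP j).1) hlowF
    exact tendsto_atTop_mono hy (tendsto_atTop_add_const_right _ 1 tendsto_natCast_atTop_atTop)

include hKform

theorem norm_K_sq {w : ℂ} (hw : 0 < w.im) :
    ‖K w‖ ^ 2 = (‖E w‖ ^ 2 - ‖E ((starRingEnd ℂ) w)‖ ^ 2) / (4 * Real.pi * w.im) := by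
  have hne : w ≠ (starRingEnd ℂ) w := fun h => by
    have := congrArg Complex.im h
    rw [Complex.conj_im] at this
    linarith
  have h := hrepro (K w) w
  rw [hKform w w hne, inner_self_eq_norm_sq_to_K, Complex.mul_conj', Complex.conj_mul',
    show (starRingEnd ℂ) w - w = -(w - (starRingEnd ℂ) w) by ring, Complex.sub_conj] at h
  have hden : 2 * (Real.pi : ℂ) * Complex.I * -(((2 * w.im : ℝ) : ℂ) * Complex.I)
      = ((4 * Real.pi * w.im : ℝ) : ℂ) := by
    push_cast
    ring_nf
    rw [Complex.I_sq]
    ring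
  rw [hden] at h
  apply Complex.ofReal_injective
  push_cast at h ⊢
  exact h

theorem norm_ev_le_norm_E {F : H} {w : ℂ} (hw : 0 < w.im) (hF : ‖F‖ ^ 2 ≤ 4 * Real.pi * w.im) :
    ‖ev F w‖ ≤ ‖E w‖ := by
  have hK : ‖K w‖ ^ 2 ≤ ‖E w‖ ^ 2 / (4 * Real.pi * w.im) := by
    rw [norm_K_sq hKform hrepro hw]
    gcongr
    exact sub_le_self _ (sq_nonneg _)
  refine le_of_pow_le_pow_left₀ two_ne_zero (norm_nonneg _) ?_
  calc ‖ev F w‖ ^ 2 ≤ (‖K w‖ * ‖F‖) ^ 2 := by gcongr; exact norm_ev_le_norm_K_mul hrepro F w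
    _ = ‖K w‖ ^ 2 * ‖F‖ ^ 2 := by ring
    _ ≤ ‖E w‖ ^ 2 / (4 * Real.pi * w.im) * (4 * Real.pi * w.im) := by gcongr
    _ = ‖E w‖ ^ 2 := by field_simp

theorem meanType_le_zero (F : H) : meanType ev E F ≤ 0 := by
  refine limsup_le_of_le (by isBoundedDefault) ?_
  filter_upwards [eventually_gt_atTop 0, eventually_ge_atTop (‖F‖ ^ 2)] with y hy hyF
  have hle : ‖ev F (y * I)‖ ≤ ‖E (y * I)‖ :=
    norm_ev_le_norm_E hKform hrepro (by simpa using hy) (by simp; nlinarith [Real.pi_gt_three])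
  have hlog : Real.log (‖ev F (y * I)‖ / ‖E (y * I)‖) ≤ 0 :=
    Real.log_nonpos (by positivity) (div_le_one_of_le₀ hle (norm_nonneg _))
  exact_mod_cast div_nonpos_of_nonpos_of_nonneg hlog hy.le

end DeBranges

theorem meanType_sup_attained_on_RmSet_general
    {H : Type*} [NormedAddCommGroup H] [InnerProductSpace ℂ H] [CompleteSpace H]
    (ev : H →ₗ[ℂ] (ℂ → ℂ))
    (E : ℂ → ℂ)
    (K : ℂ → H)
    (hKform : ∀ w z : ℂ, z ≠ (starRingEnd ℂ) w →
      ev (K w) z = (E z * (starRingEnd ℂ) (E w) -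
          (starRingEnd ℂ) (E ((starRingEnd ℂ) z)) * E ((starRingEnd ℂ) w)) /
        (2 * (Real.pi : ℂ) * Complex.I * ((starRingEnd ℂ) w - z)))
    (hrepro : ∀ (F : H) (w : ℂ), ⟪K w, F⟫_ℂ = ev F w)
    (D : Set ℂ)
    (m : ℂ → ℝ)
    (hne : ∃ F ∈ RmSet ev D m, F ≠ 0) :
    ∃ F ∈ RmSet ev D m, F ≠ 0 ∧
      meanType ev E F =
        sSup (meanType ev E '' {G : H | G ∈ RmSet ev D m ∧ G ≠ 0}) := by
  set R := {G : H | G ∈ RmSet ev D m ∧ G ≠ 0}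
  set s := sSup (meanType ev E '' R)
  by_contra! hcon
  have hlt : ∀ G ∈ R, meanType ev E G < s := fun G hG =>
    (le_sSup (Set.mem_image_of_mem _ hG)).lt_of_ne (hcon G hG.1 hG.2)
  have hs : s ≤ 0 := sSup_le (Set.forall_mem_image.2 fun G _ => meanType_le_zero hKform hrepro G)
  obtain ⟨F₀, hF₀, hF₀0⟩ := hne
  obtain ⟨σ, hσ⟩ : ∃ σ : ℝ, (σ : EReal) = s :=
    ⟨s.toReal, EReal.coe_toReal (hs.trans_lt EReal.zero_lt_top).ne (hlt F₀ ⟨hF₀, hF₀0⟩).ne_bot⟩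
  have hG : ∀ j : ℕ, ∃ G ∈ R, ((σ - 1 / (j + 1) : ℝ) : EReal) < meanType ev E G := fun j =>
    Set.exists_mem_image.1 <| lt_sSup_iff.1 <|
      (EReal.coe_lt_coe_iff.2 (sub_lt_self σ Nat.one_div_pos_of_nat)).trans_eq hσ
  choose G hG hGσ using hG
  have hr : Tendsto (fun j : ℕ => σ - 1 / ((j : ℝ) + 1)) atTop (𝓝 σ) := by
    simpa using (tendsto_const_nhds (x := σ)).sub tendsto_one_div_add_atTop_nhds_zero_nat
  obtain ⟨F, hF, hF0, hσF⟩ := exists_mem_RmSet_le_meanType hrepro (fun j => (hG j).1) hr hGσ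
    fun j => (hlt _ (hG j)).trans_le hs
  exact (hlt F ⟨hF, hF0⟩).not_ge (hσ ▸ hσF)

/-- In a de Branges space `H(E)`, the supremum of mean types over
`R_m(H) \ {0}` is attained. -/
theorem meanType_sup_attained_on_RmSet
    {H : Type*} [NormedAddCommGroup H] [InnerProductSpace ℂ H] [CompleteSpace H]
    (ev : H →ₗ[ℂ] (ℂ → ℂ)) (hinj : Function.Injective ev)
    (hentire : ∀ F : H, Differentiable ℂ (ev F))
    (E : ℂ → ℂ) (hE : Differentiable ℂ E)
    (hHB : ∀ z : ℂ, 0 < z.im → ‖E ((starRingEnd ℂ) z)‖ < ‖E z‖)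
    (K : ℂ → H)
    (hKform : ∀ w z : ℂ, z ≠ (starRingEnd ℂ) w →
      ev (K w) z = (E z * (starRingEnd ℂ) (E w) -
          (starRingEnd ℂ) (E ((starRingEnd ℂ) z)) * E ((starRingEnd ℂ) w)) /
        (2 * (Real.pi : ℂ) * Complex.I * ((starRingEnd ℂ) w - z)))
    (hrepro : ∀ (F : H) (w : ℂ), ⟪K w, F⟫_ℂ = ev F w)
    (D : Set ℂ) (hD : D ⊆ {z : ℂ | 0 ≤ z.im})
    (m : ℂ → ℝ) (hm : ∀ z ∈ D, 0 ≤ m z)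
    (hne : ∃ F ∈ RmSet ev D m, F ≠ 0) :
    ∃ F ∈ RmSet ev D m, F ≠ 0 ∧
      meanType ev E F =
        sSup (meanType ev E '' {G : H | G ∈ RmSet ev D m ∧ G ≠ 0}) :=
  meanType_sup_attained_on_RmSet_general ev E K hKform hrepro D m hne
end
end

section
/- The following are equivalent: (1) there exists C > 0 such that ‖F‖_m ≤ C·‖F‖_H for all F ∈ R_m(H) (the norms ‖·‖_m and ‖·‖_H are equivalent on R_m(H)); (2) R_m(H) is a closed subset of H with respect to the norm ‖·‖_H; (3) R_m(H) = H. -/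
open Complex Filter Topology

open scoped InnerProductSpace

noncomputable section

/-!
Every reproducing kernel `K w` lies in `R_m(H)`: on the axis `iy`, once `y` is large compared
with `|Im w|`, the explicit formula bounds `|K w (±iy)|` by a multiple of `|E(iy)|/(y + 1)`
(the Hermite–Biehler inequality gives `|E(-iy)| ≤ |E(iy)|`), and on the remaining compact piece
continuity suffices. As `R_m(H)` is a subspace and the kernels span a dense subspace, `R_m(H)` is
closed only if it is everything. If `R_m(H) = H`, the functionals `F ↦ F(z)/m(z)` and
`F ↦ F(conj z)/m(z)`, `z ∈ D`, are pointwise bounded, hence uniformly bounded by Banach–Steinhaus,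
which is the norm equivalence. Conversely, the norm equivalence describes `R_m(H)` by the closed
conditions `|F(z)|, |F(conj z)| ≤ C ‖F‖ m(z)`.
-/

open ComplexConjugate

section RmSet

variable {H : Type*} [NormedAddCommGroup H] [InnerProductSpace ℂ H]
  {ev : H →ₗ[ℂ] (ℂ → ℂ)} {D : Set ℂ} {m : ℂ → ℝ}

lemma mem_rmSet_iff_s4 {F : H} : F ∈ RmSet ev D m ↔
    ∃ C : ℝ, 0 ≤ C ∧ ∀ z ∈ D, ‖ev F z‖ ≤ C * m z ∧ ‖ev F (conj z)‖ ≤ C * m z := by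
  simp only [RmSet, Set.mem_ofPred_eq, Complex.norm_conj]

variable (ev D m) in
def rmSubmodule : Submodule ℂ H where
  carrier := RmSet ev D m
  zero_mem' := ⟨0, le_rfl, fun z _ => by simp⟩
  add_mem' := by
    simp only [mem_rmSet_iff_s4]
    rintro F G ⟨C₁, hC₁, hF⟩ ⟨C₂, hC₂, hG⟩
    refine ⟨C₁ + C₂, add_nonneg hC₁ hC₂, fun z hz => ?_⟩
    simp only [map_add, Pi.add_apply, add_mul]
    exact ⟨norm_add_le_of_le (hF z hz).1 (hG z hz).1,
      norm_add_le_of_le (hF z hz).2 (hG z hz).2⟩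
  smul_mem' := by
    simp only [mem_rmSet_iff_s4]
    rintro c F ⟨C, hC, hF⟩
    refine ⟨‖c‖ * C, by positivity, fun z hz => ?_⟩
    simp only [map_smul, Pi.smul_apply, smul_eq_mul, norm_mul, mul_assoc]
    exact ⟨mul_le_mul_of_nonneg_left (hF z hz).1 (norm_nonneg c),
      mul_le_mul_of_nonneg_left (hF z hz).2 (norm_nonneg c)⟩

lemma norm_ev_le_mnorm_mul (hm : ∀ z ∈ D, 0 < m z) {F : H} (hF : F ∈ RmSet ev D m)
    {z : ℂ} (hz : z ∈ D) :
    ‖ev F z‖ ≤ mnorm ev D m F * m z ∧ ‖conj (ev F (conj z))‖ ≤ mnorm ev D m F * m z := by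
  have hsInf : ∀ a : ℝ, (∀ C : ℝ, 0 ≤ C → (∀ z ∈ D, ‖ev F z‖ ≤ C * m z ∧
      ‖conj (ev F (conj z))‖ ≤ C * m z) → a ≤ C * m z) → a ≤ mnorm ev D m F * m z := by
    intro a ha
    rw [← div_le_iff₀ (hm z hz)]
    exact (le_csInf hF fun C hC => (div_le_iff₀ (hm z hz)).2 (ha C hC.1 hC.2)).trans
      (le_max_right _ _)
  exact ⟨hsInf _ fun C _ h => (h z hz).1, hsInf _ fun C _ h => (h z hz).2⟩

lemma mnorm_le_max {F : H} {C : ℝ} (hC : 0 ≤ C)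
    (h : ∀ z ∈ D, ‖ev F z‖ ≤ C * m z ∧ ‖ev F (conj z)‖ ≤ C * m z) :
    mnorm ev D m F ≤ max ‖F‖ C := by
  refine max_le_max le_rfl (csInf_le ⟨0, fun _ hC' => hC'.1⟩ ⟨hC, fun z hz => ?_⟩)
  rw [Complex.norm_conj]
  exact h z hz

end RmSet

section ReproducingKernel

variable {H : Type*} [NormedAddCommGroup H] [InnerProductSpace ℂ H]
  {ev : H →ₗ[ℂ] (ℂ → ℂ)} {K : ℂ → H}

variable (ev K) in
def IsReproducingKernel : Prop :=
  ∀ (F : H) (w : ℂ), ⟪K w, F⟫_ℂ = ev F w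

lemma continuous_ev_apply (hrepro : IsReproducingKernel ev K) (w : ℂ) :
    Continuous fun F => ev F w :=
  (continuous_const.inner continuous_id).congr fun F => hrepro F w

lemma isClosed_rmSet_of_mnorm_le (hrepro : IsReproducingKernel ev K)
    {D : Set ℂ} {m : ℂ → ℝ} (hm : ∀ z ∈ D, 0 < m z) {C : ℝ} (hC : 0 ≤ C)
    (hle : ∀ F ∈ RmSet ev D m, mnorm ev D m F ≤ C * ‖F‖) :
    IsClosed (RmSet ev D m) := by
  have hset : RmSet ev D m = ⋂ z ∈ D, {F | ‖ev F z‖ ≤ C * ‖F‖ * m z} ∩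
      {F | ‖conj (ev F (conj z))‖ ≤ C * ‖F‖ * m z} := by
    ext F
    simp only [Set.mem_iInter, Set.mem_inter_iff, Set.mem_ofPred_eq]
    constructor
    · intro hF z hz
      have hmF := hle F hF
      have hmz := (hm z hz).le
      obtain ⟨h₁, h₂⟩ := norm_ev_le_mnorm_mul hm hF hz
      exact ⟨h₁.trans (by gcongr), h₂.trans (by gcongr)⟩
    · exact fun h => ⟨C * ‖F‖, by positivity, h⟩
  rw [hset]
  refine isClosed_biInter fun z _ =>
    (isClosed_le (continuous_ev_apply hrepro z).norm ?_).inter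
      (isClosed_le (Complex.continuous_conj.comp (continuous_ev_apply hrepro _)).norm ?_) <;>
    fun_prop

variable [CompleteSpace H]

lemma dense_of_kernel_mem (hinj : Function.Injective ev)
    (hrepro : IsReproducingKernel ev K) {S : Submodule ℂ H}
    (hK : ∀ w, K w ∈ S) : Dense (S : Set H) := by
  have hspan : Submodule.span ℂ (Set.range K) ≤ S :=
    Submodule.span_le.2 (Set.range_subset_iff.2 hK)
  have horth : (Submodule.span ℂ (Set.range K))ᗮ = ⊥ := by
    refine (Submodule.eq_bot_iff _).2 fun F hF => hinj ?_
    rw [map_zero]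
    funext w
    rw [← hrepro]
    exact (Submodule.mem_orthogonal _ _).1 hF (K w) (Submodule.subset_span ⟨w, rfl⟩)
  have hclosure : (Submodule.span ℂ (Set.range K)).topologicalClosure = ⊤ := by
    rw [← Submodule.orthogonal_orthogonal_eq_closure, horth, Submodule.bot_orthogonal_eq_top]
  exact ((Submodule.dense_iff_topologicalClosure_eq_top).2 hclosure).mono hspan

lemma exists_norm_ev_le_of_forall_exists (hrepro : IsReproducingKernel ev K)
    {ι : Type*} (φ : ι → ℂ) {c : ι → ℝ} (hc : ∀ i, 0 < c i)
    (hbdd : ∀ F : H, ∃ C, ∀ i, ‖ev F (φ i)‖ ≤ C * c i) :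
    ∃ C, ∀ F : H, ∀ i, ‖ev F (φ i)‖ ≤ C * ‖F‖ * c i := by
  let g : ι → H →L[ℂ] ℂ := fun i => (c i)⁻¹ • innerSL ℂ (K (φ i))
  have hg : ∀ i F, ‖g i F‖ = ‖ev F (φ i)‖ / c i := fun i F => by
    simp only [g, smul_apply, innerSL_apply_apply, hrepro F (φ i), norm_smul, norm_inv,
      Real.norm_of_nonneg (hc i).le, inv_mul_eq_div]
  obtain ⟨C, hC⟩ := banach_steinhaus (g := g) fun F => by
    obtain ⟨C, hC⟩ := hbdd F
    exact ⟨C, fun i => by rw [hg, div_le_iff₀ (hc i)]; exact hC i⟩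
  refine ⟨C, fun F i => ?_⟩
  rw [← div_le_iff₀ (hc i), ← hg]
  exact (g i).le_of_opNorm_le (hC i) F

lemma exists_mnorm_le_of_rmSet_eq_univ (hrepro : IsReproducingKernel ev K)
    {D : Set ℂ} {m : ℂ → ℝ} (hm : ∀ z ∈ D, 0 < m z) (huniv : RmSet ev D m = Set.univ) :
    ∃ C : ℝ, 0 < C ∧ ∀ F ∈ RmSet ev D m, mnorm ev D m F ≤ C * ‖F‖ := by
  have hbdd : ∀ F : H, ∃ C, ∀ z : D, ‖ev F z‖ ≤ C * m z ∧ ‖ev F (conj z)‖ ≤ C * m z := by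
    intro F
    obtain ⟨C, -, hC⟩ := mem_rmSet_iff_s4.1 (huniv ▸ Set.mem_univ F)
    exact ⟨C, fun z => hC z z.2⟩
  have hm' : ∀ z : D, 0 < m z := fun z => hm z z.2
  obtain ⟨C₁, hC₁⟩ := exists_norm_ev_le_of_forall_exists hrepro (fun z : D => (z : ℂ)) hm'
    fun F => (hbdd F).imp fun _ h z => (h z).1
  obtain ⟨C₂, hC₂⟩ := exists_norm_ev_le_of_forall_exists hrepro (fun z : D => conj (z : ℂ)) hm'
    fun F => (hbdd F).imp fun _ h z => (h z).2
  set C := max (max C₁ C₂) 1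
  refine ⟨C, zero_lt_one.trans_le (le_max_right _ _), fun F _ => ?_⟩
  have hCF : 0 ≤ C * ‖F‖ := mul_nonneg (zero_le_one.trans (le_max_right _ _)) (norm_nonneg F)
  refine (mnorm_le_max hCF fun z hz => ⟨?_, ?_⟩).trans
    (max_le (le_mul_of_one_le_left (norm_nonneg F) (le_max_right _ _)) le_rfl)
  · refine (hC₁ F ⟨z, hz⟩).trans ?_
    have := (hm z hz).le
    gcongr
    exact (le_max_left _ _).trans (le_max_left _ _)
  · refine (hC₂ F ⟨z, hz⟩).trans ?_
    have := (hm z hz).le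
    gcongr
    exact (le_max_right _ _).trans (le_max_left _ _)

end ReproducingKernel

lemma exists_forall_ge_le_mul {f g : ℝ → ℝ} {a Y C : ℝ} (hf : ContinuousOn f (Set.Icc a Y))
    (hg : ContinuousOn g (Set.Icc a Y)) (hg0 : ∀ y ≥ a, 0 < g y) (hfar : ∀ y ≥ Y, f y ≤ C * g y) :
    ∃ C', ∀ y ≥ a, f y ≤ C' * g y := by
  obtain ⟨C₁, hC₁⟩ := isCompact_Icc.exists_bound_of_continuousOn
    (hf.div hg fun y hy => (hg0 y hy.1).ne')
  refine ⟨max C C₁, fun y hy => ?_⟩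
  have hgy := hg0 y hy
  rcases le_total y Y with hyY | hYy
  · calc f y = f y / g y * g y := (div_mul_cancel₀ _ hgy.ne').symm
      _ ≤ C₁ * g y := by gcongr; exact (le_abs_self _).trans (hC₁ y ⟨hy, hyY⟩)
      _ ≤ max C C₁ * g y := by gcongr; exact le_max_right _ _
  · exact (hfar y hYy).trans (by gcongr; exact le_max_left _ _)

lemma norm_ofReal_mul_I_add_I {y : ℝ} (hy : -1 ≤ y) : ‖(y : ℂ) * I + I‖ = y + 1 := by
  rw [← add_one_mul, norm_mul, Complex.norm_I, mul_one, ← Complex.ofReal_one,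
    ← Complex.ofReal_add, Complex.norm_of_nonneg (by linarith)]

section DeBrangesKernel

variable {H : Type*} [NormedAddCommGroup H] [InnerProductSpace ℂ H]
  {ev : H →ₗ[ℂ] (ℂ → ℂ)} {E : ℂ → ℂ} {K : ℂ → H}

variable (ev E K) in
def IsDeBrangesKernel : Prop :=
  ∀ w z : ℂ, z ≠ conj w →
    ev (K w) z = (E z * conj (E w) - conj (E (conj z)) * E (conj w)) /
      (2 * (Real.pi : ℂ) * I * (conj w - z))

lemma norm_ev_kernel_le (hK : IsDeBrangesKernel ev E K) {w ζ : ℂ} (hne : ζ ≠ conj w) :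
    ‖ev (K w) ζ‖ ≤ max ‖E ζ‖ ‖E (conj ζ)‖ * (‖E w‖ + ‖E (conj w)‖) /
      (2 * Real.pi * ‖conj w - ζ‖) := by
  have hden : ‖2 * (Real.pi : ℂ) * I * (conj w - ζ)‖ = 2 * Real.pi * ‖conj w - ζ‖ := by
    simp [abs_of_pos Real.pi_pos]
  rw [hK w ζ hne, norm_div, hden]
  gcongr
  calc ‖E ζ * conj (E w) - conj (E (conj ζ)) * E (conj w)‖
      ≤ ‖E ζ‖ * ‖E w‖ + ‖E (conj ζ)‖ * ‖E (conj w)‖ :=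
        (norm_sub_le _ _).trans_eq (by simp only [norm_mul, Complex.norm_conj])
    _ ≤ max ‖E ζ‖ ‖E (conj ζ)‖ * (‖E w‖ + ‖E (conj w)‖) := by
        rw [mul_add]
        gcongr
        exacts [le_max_left _ _, le_max_right _ _]

lemma norm_ev_kernel_le_of_abs_im (hK : IsDeBrangesKernel ev E K) {w ζ : ℂ}
    (hζ : 2 * |w.im| + 1 ≤ |ζ.im|) :
    ‖ev (K w) ζ‖ ≤ (‖E w‖ + ‖E (conj w)‖) / Real.pi *
      (max ‖E ζ‖ ‖E (conj ζ)‖ / (|ζ.im| + 1)) := by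
  have hdist : (|ζ.im| + 1) / 2 ≤ ‖conj w - ζ‖ :=
    calc (|ζ.im| + 1) / 2 ≤ |ζ.im| - |w.im| := by linarith
      _ ≤ |(conj w - ζ).im| := by
        rw [Complex.sub_im, Complex.conj_im, abs_sub_comm, ← abs_neg w.im]
        exact abs_sub_abs_le_abs_sub _ _
      _ ≤ ‖conj w - ζ‖ := Complex.abs_im_le_norm _
  have hne : ζ ≠ conj w := by
    intro h
    rw [h, sub_self, norm_zero] at hdist
    linarith [abs_nonneg (conj w).im]
  refine (norm_ev_kernel_le hK hne).trans ?_
  calc _ ≤ max ‖E ζ‖ ‖E (conj ζ)‖ * (‖E w‖ + ‖E (conj w)‖) /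
        (2 * Real.pi * ((|ζ.im| + 1) / 2)) := by gcongr
    _ = _ := by field_simp

lemma exists_norm_ev_kernel_le_on_axis (hK : IsDeBrangesKernel ev E K) (hE : Continuous E)
    (hHB : ∀ z : ℂ, 0 < z.im → ‖E (conj z)‖ < ‖E z‖) {w : ℂ} (hKw : Continuous (ev (K w)))
    {ζ : ℝ → ℂ} (hζ : Continuous ζ) (hζim : ∀ y ≥ 1, |(ζ y).im| = y)
    (hζE : ∀ y ≥ 1, max ‖E (ζ y)‖ ‖E (conj (ζ y))‖ = ‖E (y * I)‖) :
    ∃ C, ∀ y ≥ 1, ‖ev (K w) (ζ y)‖ ≤ C * (‖E (y * I)‖ / (y + 1)) := by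
  have hY : 1 ≤ 2 * |w.im| + 1 := by linarith [abs_nonneg w.im]
  have hg : ContinuousOn (fun y : ℝ => ‖E (y * I)‖ / (y + 1)) (Set.Icc 1 (2 * |w.im| + 1)) :=
    (by fun_prop : Continuous fun y : ℝ => ‖E (y * I)‖).continuousOn.div
      (by fun_prop) fun y hy => by linarith [hy.1]
  have hg₀ : ∀ y ≥ (1 : ℝ), 0 < ‖E (y * I)‖ / (y + 1) := fun y hy =>
    div_pos ((norm_nonneg _).trans_lt (hHB _ (by simp; linarith))) (by linarith)
  refine exists_forall_ge_le_mul (C := (‖E w‖ + ‖E (conj w)‖) / Real.pi)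
    (hKw.comp hζ).norm.continuousOn hg hg₀ fun y hy => ?_
  have hy₁ := hY.trans hy
  have hbound := norm_ev_kernel_le_of_abs_im hK (w := w) (ζ := ζ y) ((hζim y hy₁).symm ▸ hy)
  rwa [hζim y hy₁, hζE y hy₁] at hbound

lemma kernel_mem_rmSet {w : ℂ} (hKw : Continuous (ev (K w))) (hE : Continuous E)
    (hHB : ∀ z : ℂ, 0 < z.im → ‖E (conj z)‖ < ‖E z‖) (hK : IsDeBrangesKernel ev E K)
    {D : Set ℂ} (hD : D = {z : ℂ | ∃ y : ℝ, 1 ≤ y ∧ z = (y : ℂ) * I})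
    {m : ℂ → ℝ} (hm : ∀ z : ℂ, m z = ‖E z‖ / ‖z + I‖) : K w ∈ RmSet ev D m := by
  have hI : Continuous fun y : ℝ => (y : ℂ) * I := by fun_prop
  have hconj : ∀ y : ℝ, 1 ≤ y → ‖E (conj (y * I))‖ ≤ ‖E (y * I)‖ :=
    fun y hy => (hHB _ (by simp; linarith)).le
  obtain ⟨C₁, hC₁⟩ := exists_norm_ev_kernel_le_on_axis hK hE hHB hKw hI
    (fun y hy => by simp [abs_of_pos (by linarith : (0 : ℝ) < y)])
    fun y hy => max_eq_left (hconj y hy)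
  obtain ⟨C₂, hC₂⟩ := exists_norm_ev_kernel_le_on_axis hK hE hHB hKw
    (Complex.continuous_conj.comp hI) (fun y hy => by simp [abs_of_pos (by linarith : (0 : ℝ) < y)])
    fun y hy => by rw [Function.comp_apply, Complex.conj_conj, max_eq_right (hconj y hy)]
  subst hD
  refine mem_rmSet_iff_s4.2 ⟨max (max C₁ C₂) 0, le_max_right _ _, ?_⟩
  rintro _ ⟨y, hy, rfl⟩
  rw [hm, norm_ofReal_mul_I_add_I (by linarith)]
  have hmy : 0 ≤ ‖E (y * I)‖ / (y + 1) := by positivity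
  exact ⟨(hC₁ y hy).trans (by gcongr; exact (le_max_left _ _).trans (le_max_left _ _)),
    (hC₂ y hy).trans (by gcongr; exact (le_max_right _ _).trans (le_max_left _ _))⟩

lemma majorant_pos (hHB : ∀ z : ℂ, 0 < z.im → ‖E (conj z)‖ < ‖E z‖)
    {D : Set ℂ} (hD : D = {z : ℂ | ∃ y : ℝ, 1 ≤ y ∧ z = (y : ℂ) * I})
    {m : ℂ → ℝ} (hm : ∀ z : ℂ, m z = ‖E z‖ / ‖z + I‖) : ∀ z ∈ D, 0 < m z := by
  subst hD
  rintro _ ⟨y, hy, rfl⟩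
  rw [hm, norm_ofReal_mul_I_add_I (by linarith)]
  exact div_pos ((norm_nonneg _).trans_lt (hHB _ (by simp; linarith))) (by linarith)

end DeBrangesKernel

theorem rm_norm_equiv_iff_closed_iff_all_general
    {H : Type*} [NormedAddCommGroup H] [InnerProductSpace ℂ H] [CompleteSpace H]
    (ev : H →ₗ[ℂ] (ℂ → ℂ)) (hinj : Function.Injective ev)
    (hentire : ∀ F : H, Differentiable ℂ (ev F))
    (E : ℂ → ℂ) (hE : Differentiable ℂ E)
    (hHB : ∀ z : ℂ, 0 < z.im → ‖E ((starRingEnd ℂ) z)‖ < ‖E z‖)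
    (K : ℂ → H)
    (hKform : ∀ w z : ℂ, z ≠ (starRingEnd ℂ) w →
      ev (K w) z = (E z * (starRingEnd ℂ) (E w) -
          (starRingEnd ℂ) (E ((starRingEnd ℂ) z)) * E ((starRingEnd ℂ) w)) /
        (2 * (Real.pi : ℂ) * Complex.I * ((starRingEnd ℂ) w - z)))
    (hrepro : ∀ (F : H) (w : ℂ), ⟪K w, F⟫_ℂ = ev F w)
    (D : Set ℂ) (hD : D = {z : ℂ | ∃ y : ℝ, 1 ≤ y ∧ z = (y : ℂ) * Complex.I})
    (m : ℂ → ℝ) (hm : ∀ z : ℂ, m z = ‖E z‖ / ‖z + Complex.I‖) :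
    ((∃ C : ℝ, 0 < C ∧ ∀ F ∈ RmSet ev D m, mnorm ev D m F ≤ C * ‖F‖) ↔
        IsClosed (RmSet ev D m)) ∧
      (IsClosed (RmSet ev D m) ↔ RmSet ev D m = Set.univ) := by
  have hm₀ := majorant_pos hHB hD hm
  have hdense : Dense (rmSubmodule ev D m : Set H) :=
    dense_of_kernel_mem hinj hrepro fun w =>
      kernel_mem_rmSet (hentire (K w)).continuous hE.continuous hHB hKform hD hm
  have hclosed_univ : IsClosed (RmSet ev D m) → RmSet ev D m = Set.univ :=
    fun hcl => hcl.closure_eq ▸ hdense.closure_eq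
  refine ⟨⟨fun ⟨C, hC, hle⟩ => isClosed_rmSet_of_mnorm_le hrepro hm₀ hC.le hle,
    fun hcl => exists_mnorm_le_of_rmSet_eq_univ hrepro hm₀ (hclosed_univ hcl)⟩,
    ⟨hclosed_univ, fun huniv => huniv ▸ isClosed_univ⟩⟩

/-- **Statement 6.** For the majorant `m = m_E` restricted to `D = i[1,∞)` in
`H = H(E)`, the following are equivalent: (1) `‖·‖_m` and `‖·‖_H` are equivalent on
`R_m(H)`; (2) `R_m(H)` is `‖·‖_H`-closed; (3) `R_m(H) = H`. -/
theorem rm_norm_equiv_iff_closed_iff_all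
    {H : Type*} [NormedAddCommGroup H] [InnerProductSpace ℂ H] [CompleteSpace H]
    (ev : H →ₗ[ℂ] (ℂ → ℂ)) (hinj : Function.Injective ev)
    (hentire : ∀ F : H, Differentiable ℂ (ev F))
    (E : ℂ → ℂ) (hE : Differentiable ℂ E)
    (hHB : ∀ z : ℂ, 0 < z.im → ‖E ((starRingEnd ℂ) z)‖ < ‖E z‖)
    (K : ℂ → H)
    (hKform : ∀ w z : ℂ, z ≠ (starRingEnd ℂ) w →
      ev (K w) z = (E z * (starRingEnd ℂ) (E w) -
          (starRingEnd ℂ) (E ((starRingEnd ℂ) z)) * E ((starRingEnd ℂ) w)) /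
        (2 * (Real.pi : ℂ) * Complex.I * ((starRingEnd ℂ) w - z)))
    (hrepro : ∀ (F : H) (w : ℂ), ⟪K w, F⟫_ℂ = ev F w)
    (hinf : ¬ FiniteDimensional ℂ H)
    (hnz : ∀ x : ℝ, ∃ F : H, ev F (x : ℂ) ≠ 0)
    (D : Set ℂ) (hD : D = {z : ℂ | ∃ y : ℝ, 1 ≤ y ∧ z = (y : ℂ) * Complex.I})
    (m : ℂ → ℝ) (hm : ∀ z : ℂ, m z = ‖E z‖ / ‖z + Complex.I‖) :
    ((∃ C : ℝ, 0 < C ∧ ∀ F ∈ RmSet ev D m, mnorm ev D m F ≤ C * ‖F‖) ↔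
        IsClosed (RmSet ev D m)) ∧
      (IsClosed (RmSet ev D m) ↔ RmSet ev D m = Set.univ) :=
  rm_norm_equiv_iff_closed_iff_all_general ev hinj hentire E hE hHB K hKform hrepro D hD m hm
end
end

section
/- For every d ∈ ℓ∞ the following three inequalities hold: (a) ∑_{k=1}^∞ |Λ(d)_k|² ≤ 4·(1 + π²/18)·‖d‖_∞²; (b) sup_{k≥1} |Λ(d)_k| ≤ ‖d‖_∞; (c) sup_{n≥1} |∑_{k=1}^n Λ(d)_k| ≤ ‖d‖_∞. -/
/-!
On the block `(l³, (l + 1)³]` of length `3l² + 3l + 1`, `Λ(d)` is the increment `d (l + 1) - d l`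
spread evenly. Hence the partial sums of `Λ(d)` interpolate linearly between consecutive
values of `d` and stay in the ball of radius `‖d‖_∞`, which gives (c); each entry is at most
`2‖d‖_∞ / 7` outside the first block, which gives (b); and block `l ≥ 1` contributes at most
`4‖d‖_∞² / (3 l²)` to the sum of squares, so (a) follows from `∑ 1 / l² = π² / 6`.
-/

open Finset

theorem StrictMono.exists_mem_Ioc {n : ℕ → ℕ} (hn : StrictMono n) {k : ℕ} (hk : n 0 < k) :
    ∃ l, k ∈ Ioc (n l) (n (l + 1)) := by
  have hex : ∃ l, k ≤ n l := ⟨k, hn.id_le k⟩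
  obtain ⟨l, hl⟩ : ∃ l, Nat.find hex = l + 1 := by
    refine Nat.exists_eq_succ_of_ne_zero fun h => hk.not_ge ?_
    simpa [h] using Nat.find_spec hex
  exact ⟨l, mem_Ioc.2 ⟨not_le.1 (Nat.find_min hex (by omega)), hl ▸ Nat.find_spec hex⟩⟩

theorem Finset.sum_Ioc_eq_sum_range_sum_Ioc {M : Type*} [AddCommMonoid M] {n : ℕ → ℕ}
    (hn : Monotone n) (f : ℕ → M) (L : ℕ) :
    ∑ k ∈ Ioc (n 0) (n L), f k = ∑ l ∈ range L, ∑ k ∈ Ioc (n l) (n (l + 1)), f k := by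
  induction L with
  | zero => simp
  | succ L ih => rw [sum_range_succ, ← ih, sum_Ioc_consecutive _ (hn L.zero_le) (hn L.le_succ)]

theorem sum_range_inv_succ_sq_le (m : ℕ) :
    ∑ i ∈ range m, 1 / ((i + 1 : ℕ) : ℝ) ^ 2 ≤ Real.pi ^ 2 / 6 := by
  have h : HasSum (fun i : ℕ => 1 / ((i + 1 : ℕ) : ℝ) ^ 2) (Real.pi ^ 2 / 6) := by
    simpa using (hasSum_nat_add_iff' 1).2 hasSum_zeta_two
  exact sum_le_hasSum _ (fun i _ => by positivity) h

section BlockAverage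

variable {𝕜 : Type*} [RCLike 𝕜]

/-- The paper's `Λ` for a general block sequence `n`, with blocks indexed from `0`: block `l` is
`(n l, n (l + 1)]`, the paper's block `l + 1`. -/
def IsBlockAverage (n : ℕ → ℕ) (d Λd : ℕ → 𝕜) : Prop :=
  ∀ l, ∀ k ∈ Ioc (n l) (n (l + 1)), Λd k = (d (l + 1) - d l) / ((n (l + 1) - n l : ℕ) : 𝕜)

namespace IsBlockAverage

variable {n : ℕ → ℕ} {d Λd : ℕ → 𝕜}

theorem norm_apply (h : IsBlockAverage n d Λd) {l k : ℕ} (hk : k ∈ Ioc (n l) (n (l + 1))) :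
    ‖Λd k‖ = ‖d (l + 1) - d l‖ / ((n (l + 1) - n l : ℕ) : ℝ) := by
  rw [h l k hk, norm_div, RCLike.norm_natCast]

theorem sum_Ioc_of_le (h : IsBlockAverage n d Λd) {l m : ℕ} (hm : m ≤ n (l + 1)) :
    ∑ k ∈ Ioc (n l) m, Λd k =
      (((m - n l : ℕ) : ℝ) / ((n (l + 1) - n l : ℕ) : ℝ)) • (d (l + 1) - d l) := by
  rw [sum_congr rfl fun k hk => h l k (Ioc_subset_Ioc_right hm hk), sum_const, Nat.card_Ioc,
    nsmul_eq_mul, RCLike.real_smul_eq_coe_mul]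
  push_cast
  ring

theorem sum_Ioc_block (h : IsBlockAverage n d Λd) (hn : StrictMono n) (l : ℕ) :
    ∑ k ∈ Ioc (n l) (n (l + 1)), Λd k = d (l + 1) - d l := by
  have hN : ((n (l + 1) - n l : ℕ) : ℝ) ≠ 0 :=
    Nat.cast_ne_zero.2 (Nat.sub_ne_zero_of_lt (hn l.lt_succ_self))
  rw [h.sum_Ioc_of_le le_rfl, div_self hN, one_smul]

theorem sum_Ioc_eq_sub (h : IsBlockAverage n d Λd) (hn : StrictMono n) (L : ℕ) :
    ∑ k ∈ Ioc (n 0) (n L), Λd k = d L - d 0 := by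
  rw [sum_Ioc_eq_sum_range_sum_Ioc hn.monotone, ← sum_range_sub]
  exact sum_congr rfl fun l _ => h.sum_Ioc_block hn l

theorem exists_sum_Ioc_eq_add_smul_sub (h : IsBlockAverage n d Λd) (hn : StrictMono n)
    {l m : ℕ} (hm : m ∈ Icc (n l) (n (l + 1))) :
    ∃ t ∈ Set.Icc (0 : ℝ) 1, ∑ k ∈ Ioc (n 0) m, Λd k = d l - d 0 + t • (d (l + 1) - d l) := by
  obtain ⟨hlm, hm⟩ := mem_Icc.1 hm
  refine ⟨((m - n l : ℕ) : ℝ) / ((n (l + 1) - n l : ℕ) : ℝ),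
    ⟨by positivity, div_le_one_of_le₀ (Nat.cast_le.2 (by omega)) (by positivity)⟩, ?_⟩
  rw [← sum_Ioc_consecutive _ (hn.monotone l.zero_le) hlm, h.sum_Ioc_eq_sub hn, h.sum_Ioc_of_le hm]

theorem norm_sum_Ioc_le (h : IsBlockAverage n d Λd) (hn : StrictMono n) (hd0 : d 0 = 0)
    {M : ℝ} (hM : ∀ l, ‖d l‖ ≤ M) {m : ℕ} (hm : n 0 < m) :
    ‖∑ k ∈ Ioc (n 0) m, Λd k‖ ≤ M := by
  obtain ⟨l, hl⟩ := hn.exists_mem_Ioc hm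
  obtain ⟨t, ht, hsum⟩ := h.exists_sum_Ioc_eq_add_smul_sub hn (Ioc_subset_Icc_self hl)
  rw [hsum, hd0, sub_zero, ← mem_closedBall_zero_iff]
  exact (convex_closedBall 0 M).add_smul_sub_mem (mem_closedBall_zero_iff.2 (hM l))
    (mem_closedBall_zero_iff.2 (hM (l + 1))) ht

theorem sum_Ioc_block_norm_sq (h : IsBlockAverage n d Λd) (l : ℕ) :
    ∑ k ∈ Ioc (n l) (n (l + 1)), ‖Λd k‖ ^ 2 =
      ‖d (l + 1) - d l‖ ^ 2 / ((n (l + 1) - n l : ℕ) : ℝ) := by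
  rw [sum_congr rfl fun k hk => by rw [h.norm_apply hk], sum_const, Nat.card_Ioc, nsmul_eq_mul]
  rcases eq_or_ne ((n (l + 1) - n l : ℕ) : ℝ) 0 with hN | hN
  · simp [hN]
  · field_simp

theorem sum_Ioc_norm_sq (h : IsBlockAverage n d Λd) (hn : Monotone n) (L : ℕ) :
    ∑ k ∈ Ioc (n 0) (n L), ‖Λd k‖ ^ 2 =
      ∑ l ∈ range L, ‖d (l + 1) - d l‖ ^ 2 / ((n (l + 1) - n l : ℕ) : ℝ) := by
  rw [sum_Ioc_eq_sum_range_sum_Ioc hn]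
  exact sum_congr rfl fun l _ => h.sum_Ioc_block_norm_sq l

end IsBlockAverage

end BlockAverage

theorem Nat.succ_pow_three_sub_pow_three (l : ℕ) :
    (l + 1) ^ 3 - l ^ 3 = 3 * l ^ 2 + 3 * l + 1 := by
  rw [show (l + 1) ^ 3 = l ^ 3 + (3 * l ^ 2 + 3 * l + 1) by ring, Nat.add_sub_cancel_left]

section CubeBlocks

variable {𝕜 : Type*} [RCLike 𝕜] {d : ℕ → 𝕜} {M : ℝ}

theorem norm_sub_div_cube_block_le (hd0 : d 0 = 0) (hM : ∀ l, ‖d l‖ ≤ M) (l : ℕ) :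
    ‖d (l + 1) - d l‖ / (((l + 1) ^ 3 - l ^ 3 : ℕ) : ℝ) ≤ M := by
  rw [Nat.succ_pow_three_sub_pow_three]
  rcases l.eq_zero_or_pos with rfl | hl
  · simpa [hd0] using hM 1
  have hM0 : 0 ≤ M := (norm_nonneg _).trans (hM 0)
  have hN : (2 : ℝ) ≤ ((3 * l ^ 2 + 3 * l + 1 : ℕ) : ℝ) := by norm_cast; nlinarith
  rw [div_le_iff₀ (by positivity)]
  calc ‖d (l + 1) - d l‖ ≤ ‖d (l + 1)‖ + ‖d l‖ := norm_sub_le _ _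
    _ ≤ M * 2 := by linarith [hM (l + 1), hM l]
    _ ≤ M * _ := by gcongr

theorem sq_norm_sub_div_cube_block_le (hM : ∀ l, ‖d l‖ ≤ M) (l : ℕ) :
    ‖d (l + 2) - d (l + 1)‖ ^ 2 / (((l + 2) ^ 3 - (l + 1) ^ 3 : ℕ) : ℝ) ≤
      4 / 3 * M ^ 2 * (1 / ((l + 1 : ℕ) : ℝ) ^ 2) := by
  rw [Nat.succ_pow_three_sub_pow_three]
  have hN : 3 * ((l + 1 : ℕ) : ℝ) ^ 2 ≤ ((3 * (l + 1) ^ 2 + 3 * (l + 1) + 1 : ℕ) : ℝ) := by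
    push_cast; nlinarith
  have hΔ : ‖d (l + 2) - d (l + 1)‖ ^ 2 ≤ 4 * M ^ 2 := by
    have := (norm_sub_le (d (l + 2)) (d (l + 1))).trans (add_le_add (hM _) (hM _))
    nlinarith [norm_nonneg (d (l + 2) - d (l + 1))]
  calc ‖d (l + 2) - d (l + 1)‖ ^ 2 / ((3 * (l + 1) ^ 2 + 3 * (l + 1) + 1 : ℕ) : ℝ)
      ≤ 4 * M ^ 2 / (3 * ((l + 1 : ℕ) : ℝ) ^ 2) := div_le_div₀ (by positivity) hΔ (by positivity) hN
    _ = 4 / 3 * M ^ 2 * (1 / ((l + 1 : ℕ) : ℝ) ^ 2) := by field_simp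

theorem sum_range_sq_norm_sub_div_cube_block_le (hd0 : d 0 = 0) (hM : ∀ l, ‖d l‖ ≤ M) (L : ℕ) :
    ∑ l ∈ range L, ‖d (l + 1) - d l‖ ^ 2 / (((l + 1) ^ 3 - l ^ 3 : ℕ) : ℝ) ≤
      (1 + 2 * Real.pi ^ 2 / 9) * M ^ 2 := by
  have hfirst : ‖d 1 - d 0‖ ^ 2 / (((0 + 1) ^ 3 - 0 ^ 3 : ℕ) : ℝ) ≤ M ^ 2 := by
    simpa [hd0] using pow_le_pow_left₀ (norm_nonneg _) (hM 1) 2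
  have hrest := sum_le_sum fun l (_ : l ∈ range L) => sq_norm_sub_div_cube_block_le hM l
  rw [← mul_sum] at hrest
  calc _ ≤ ∑ l ∈ range (L + 1), ‖d (l + 1) - d l‖ ^ 2 / (((l + 1) ^ 3 - l ^ 3 : ℕ) : ℝ) :=
        sum_le_sum_of_subset_of_nonneg (range_subset_range.2 L.le_succ) fun _ _ _ => by positivity
    _ ≤ 4 / 3 * M ^ 2 * (Real.pi ^ 2 / 6) + M ^ 2 := by
        rw [sum_range_succ']
        gcongr ?_ + ?_
        exact hrest.trans (by gcongr; exact sum_range_inv_succ_sq_le L)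
    _ = (1 + 2 * Real.pi ^ 2 / 9) * M ^ 2 := by ring

end CubeBlocks

/-- **Statement 10.** Properties of the averaging operator `Λ` on `ℓ∞`
(with `n_l = l³`, `d₀ = 0`): for every bounded sequence `d` with `|d_k| ≤ M` (k ≥ 1),
(a) `∑ |Λ(d)_k|² ≤ 4(1 + π²/18)·M²`, (b) `sup_k |Λ(d)_k| ≤ M`,
(c) `sup_n |∑_{k=1}^n Λ(d)_k| ≤ M`. -/
theorem lambda_operator_bounds
    (d : ℕ → ℂ) (hd0 : d 0 = 0) (M : ℝ)
    (hM : ∀ k : ℕ, 1 ≤ k → ‖d k‖ ≤ M)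
    (Λd : ℕ → ℂ)
    (hΛ : ∀ l : ℕ, 1 ≤ l → ∀ k : ℕ, (l - 1) ^ 3 < k → k ≤ l ^ 3 →
      Λd k = (d l - d (l - 1)) / ((l ^ 3 - (l - 1) ^ 3 : ℕ) : ℂ)) :
    (∀ n : ℕ, ∑ k ∈ Finset.Icc 1 n, ‖Λd k‖ ^ 2 ≤
        4 * (1 + Real.pi ^ 2 / 18) * M ^ 2) ∧
    (∀ k : ℕ, 1 ≤ k → ‖Λd k‖ ≤ M) ∧
    (∀ n : ℕ, 1 ≤ n → ‖∑ k ∈ Finset.Icc 1 n, Λd k‖ ≤ M) := by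
  have hblock : IsBlockAverage (fun l => l ^ 3) d Λd := fun l k hk => by
    simpa using hΛ (l + 1) l.succ_pos k (by simpa using (mem_Ioc.1 hk).1) (mem_Ioc.1 hk).2
  have hcube : StrictMono fun l : ℕ => l ^ 3 := Nat.pow_left_strictMono three_ne_zero
  have hdM : ∀ l, ‖d l‖ ≤ M := fun l => by
    rcases l.eq_zero_or_pos with rfl | hl
    · simpa [hd0] using (norm_nonneg _).trans (hM 1 le_rfl)
    · exact hM l hl
  have hIcc : ∀ m, Icc 1 m = Ioc (0 ^ 3) m := fun m => Icc_add_one_left_eq_Ioc 0 m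
  refine ⟨fun m => ?_, fun k hk => ?_, fun m hm => ?_⟩
  · calc ∑ k ∈ Icc 1 m, ‖Λd k‖ ^ 2 ≤ ∑ k ∈ Ioc (0 ^ 3) ((m + 1) ^ 3), ‖Λd k‖ ^ 2 := by
          rw [hIcc]
          exact sum_le_sum_of_subset_of_nonneg
            (Ioc_subset_Ioc_right (m.le_succ.trans (hcube.id_le _))) fun _ _ _ => by positivity
      _ = ∑ l ∈ range (m + 1), ‖d (l + 1) - d l‖ ^ 2 / (((l + 1) ^ 3 - l ^ 3 : ℕ) : ℝ) :=
          hblock.sum_Ioc_norm_sq hcube.monotone _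
      _ ≤ (1 + 2 * Real.pi ^ 2 / 9) * M ^ 2 := sum_range_sq_norm_sub_div_cube_block_le hd0 hdM _
      _ ≤ 4 * (1 + Real.pi ^ 2 / 18) * M ^ 2 := by nlinarith [sq_nonneg M]
  · obtain ⟨l, hl⟩ := hcube.exists_mem_Ioc hk
    rw [hblock.norm_apply hl]
    exact norm_sub_div_cube_block_le hd0 hdM l
  · rw [hIcc]
    exact hblock.norm_sum_Ioc_le hcube hd0 hdM hm
end

section
/- Let (w_k)_{k∈ℕ} be a sequence of points with Im w_k ≥ 0 and ⟨K_{w_k}, K_{w_k}⟩ > 0 for all k, and set ∇(w) := ‖K_w‖_H. If lim_{k→∞} m_E(w_k)/∇(w_k) = 0, then there exist a strictly increasing map σ : ℕ → ℕ and constants 0 < c ≤ C such that the normalized kernels K̃_{w_{σ(n)}} := K_{w_{σ(n)}}/‖K_{w_{σ(n)}}‖_H form a Riesz sequence in H: for every finitely supported sequence (a_n) of complex numbers, c·∑_n |a_n|² ≤ ‖∑_n a_n·K̃_{w_{σ(n)}}‖_H² ≤ C·∑_n |a_n|². -/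
/-!
For `Im u > 0` the kernel `K_u` is bounded by a multiple of `m_E` on the closed upper
half-plane, so `⟪K̃_{w_k}, K_u⟫ = K_u(w_k) / ‖K_{w_k}‖ → 0`. These kernels span a dense
subspace (identity theorem), hence the unit vectors `K̃_{w_k}` tend weakly to `0`. Passing to a
subsequence makes `|⟪K̃_{w_{σ m}}, K̃_{w_{σ n}}⟫| ≤ 2^{-m-1} 2^{-n-1}` for `m ≠ n`; then the Gram
matrix differs from the identity by at most `∑ 4^{-n-1} = 1/3` in norm, which gives the Riesz
bounds `2/3` and `4/3`.
-/

open Complex Filter Topology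

open scoped InnerProductSpace

open ComplexConjugate

theorem exists_strictMono_forall_lt_of_eventually {Q : ℕ → ℕ → ℕ → Prop}
    (h : ∀ n j, ∀ᶠ k in atTop, Q n j k) :
    ∃ σ : ℕ → ℕ, StrictMono σ ∧ ∀ m n, m < n → Q n (σ m) (σ n) := by
  have hstep : ∀ n N, ∃ k, N < k ∧ ∀ j ≤ N, Q n j k := fun n N =>
    (((Finset.range (N + 1)).eventually_all.mpr fun j _ => h n j).and
      (eventually_gt_atTop N)).exists.imp fun k hk =>
      ⟨hk.2, fun j hj => hk.1 j (Finset.mem_range_succ_iff.mpr hj)⟩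
  -- Demanding `Q n j k` for all `j ≤ N`, not just for the earlier terms, keeps the recursion
  -- one-step: `σ m ≤ σ p` for every `m ≤ p`.
  choose next hnext_gt hnext using hstep
  let σ : ℕ → ℕ := fun n => Nat.rec 0 (fun n σn => next (n + 1) σn) n
  have hσ : StrictMono σ := strictMono_nat_of_lt_succ fun n => hnext_gt (n + 1) (σ n)
  refine ⟨σ, hσ, fun m n hmn => ?_⟩
  obtain ⟨p, rfl⟩ : ∃ p, n = p + 1 := ⟨n - 1, by omega⟩
  exact hnext (p + 1) (σ p) (σ m) (hσ.monotone (Nat.lt_succ_iff.mp hmn))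

theorem sum_sq_half_pow_succ_le (s : Finset ℕ) :
    ∑ n ∈ s, (((1 : ℝ) / 2) ^ (n + 1)) ^ 2 ≤ 1 / 3 := by
  have hquarter : ∀ n : ℕ, (((1 : ℝ) / 2) ^ (n + 1)) ^ 2 = 1 / 4 * (1 / 4) ^ n := by
    intro n; rw [← pow_mul, mul_comm, pow_mul, pow_succ]; norm_num; ring
  have hsum : Summable fun n : ℕ => (1 : ℝ) / 4 * (1 / 4) ^ n :=
    (summable_geometric_of_lt_one (by norm_num) (by norm_num)).mul_left _
  calc ∑ n ∈ s, (((1 : ℝ) / 2) ^ (n + 1)) ^ 2 = ∑ n ∈ s, (1 : ℝ) / 4 * (1 / 4) ^ n := by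
        simp only [hquarter]
    _ ≤ ∑' n : ℕ, (1 : ℝ) / 4 * (1 / 4) ^ n := hsum.sum_le_tsum s fun _ _ => by positivity
    _ = 1 / 3 := by
        rw [tsum_mul_left, tsum_geometric_of_lt_one (by norm_num) (by norm_num)]; norm_num

section InnerProductSpace

variable {𝕜 E ι : Type*} [RCLike 𝕜] [NormedAddCommGroup E] [InnerProductSpace 𝕜 E]

theorem abs_norm_sq_sum_smul_sub_le {v : ι → E} (hv : ∀ i, ‖v i‖ = 1) {ε : ι → ℝ}
    (hε : ∀ i j, i ≠ j → ‖⟪v i, v j⟫_𝕜‖ ≤ ε i * ε j) (s : Finset ι) (a : ι → 𝕜) :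
    |‖∑ i ∈ s, a i • v i‖ ^ 2 - ∑ i ∈ s, ‖a i‖ ^ 2| ≤
      (∑ i ∈ s, ‖a i‖ ^ 2) * ∑ i ∈ s, ε i ^ 2 := by
  classical
  set G : ι → ι → 𝕜 := fun i j => ⟪v i, v j⟫_𝕜 - if i = j then 1 else 0
  have hG : ∀ i j, ‖G i j‖ ≤ ε i * ε j := by
    intro i j
    by_cases hij : i = j
    · subst hij
      simp [G, inner_self_eq_norm_sq_to_K, hv, mul_self_nonneg]
    · simpa [G, hij] using hε i j hij
  have hdiag : ∑ i ∈ s, ∑ j ∈ s, conj (a i) * a j * (if i = j then 1 else 0) =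
      ((∑ i ∈ s, ‖a i‖ ^ 2 : ℝ) : 𝕜) := by
    push_cast
    refine Finset.sum_congr rfl fun i hi => ?_
    simp [Finset.sum_ite_eq, hi, RCLike.conj_mul]
  have hexpand : ‖∑ i ∈ s, a i • v i‖ ^ 2 - ∑ i ∈ s, ‖a i‖ ^ 2 =
      RCLike.re (∑ i ∈ s, ∑ j ∈ s, conj (a i) * a j * G i j) := by
    have hinner : ⟪∑ i ∈ s, a i • v i, ∑ i ∈ s, a i • v i⟫_𝕜 =
        ∑ i ∈ s, ∑ j ∈ s, conj (a i) * a j * ⟪v i, v j⟫_𝕜 := by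
      simp only [sum_inner, inner_smul_left, inner_sum, inner_smul_right, Finset.mul_sum]
      exact Finset.sum_comm.trans (by simp only [mul_left_comm, mul_assoc])
    simp only [G, mul_sub, Finset.sum_sub_distrib, ← hinner, hdiag, map_sub,
      RCLike.ofReal_re, inner_self_eq_norm_sq]
  rw [hexpand]
  calc |RCLike.re (∑ i ∈ s, ∑ j ∈ s, conj (a i) * a j * G i j)|
      ≤ ∑ i ∈ s, ∑ j ∈ s, (‖a i‖ * ε i) * (‖a j‖ * ε j) := by
        refine (RCLike.abs_re_le_norm _).trans <| (norm_sum_le _ _).trans <|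
          Finset.sum_le_sum fun i _ => (norm_sum_le _ _).trans <|
          Finset.sum_le_sum fun j _ => ?_
        rw [norm_mul, norm_mul, RCLike.norm_conj]
        calc ‖a i‖ * ‖a j‖ * ‖G i j‖ ≤ ‖a i‖ * ‖a j‖ * (ε i * ε j) := by
              gcongr; exact hG i j
          _ = _ := by ring
    _ = (∑ i ∈ s, ‖a i‖ * ε i) ^ 2 := by rw [sq, Finset.sum_mul_sum]
    _ ≤ (∑ i ∈ s, ‖a i‖ ^ 2) * ∑ i ∈ s, ε i ^ 2 := Finset.sum_mul_sq_le_sq_mul_sq _ _ _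

theorem tendsto_inner_of_dense_span {ι : Type*} {l : Filter ι} {x : ι → E} {C : ℝ}
    (hx : ∀ i, ‖x i‖ ≤ C) {S : Set E} (hS : Dense (Submodule.span 𝕜 S : Set E))
    (h : ∀ y ∈ S, Tendsto (fun i => ⟪x i, y⟫_𝕜) l (𝓝 0)) (y : E) :
    Tendsto (fun i => ⟪x i, y⟫_𝕜) l (𝓝 0) := by
  have hbound : ∃ C, ∀ i y, ‖innerSL 𝕜 (x i) y‖ ≤ C * ‖y‖ :=
    ⟨C, fun i y => (norm_inner_le_norm _ _).trans (by gcongr; exact hx i)⟩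
  have hequi : Equicontinuous fun i (y : E) => ⟪x i, y⟫_𝕜 :=
    ((NormedSpace.equicontinuous_TFAE fun i => innerSL 𝕜 (x i)).out 3 1).mp hbound
  have hclosed : IsClosed {y : E | Tendsto (fun i => ⟪x i, y⟫_𝕜) l (𝓝 0)} :=
    hequi.isClosed_setOfPred_tendsto (f := fun _ => 0) continuous_const
  have hspan : (Submodule.span 𝕜 S : Set E) ⊆ {y | Tendsto (fun i => ⟪x i, y⟫_𝕜) l (𝓝 0)} := by
    intro y hy
    induction hy using Submodule.span_induction with
    | mem y hy => exact h y hy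
    | zero => simpa using tendsto_const_nhds
    | add y z _ _ hy hz => simpa [inner_add_right] using hy.add hz
    | smul c y _ hy => simpa [inner_smul_right] using hy.const_mul c
  exact hclosed.closure_subset_iff.mpr hspan (hS y)

theorem exists_strictMono_norm_inner_le_mul {x : ℕ → E}
    (hx : ∀ y, Tendsto (fun k => ⟪x k, y⟫_𝕜) atTop (𝓝 0)) {ε : ℕ → ℝ} (hε : Antitone ε)
    (hε_pos : ∀ n, 0 < ε n) :
    ∃ σ : ℕ → ℕ, StrictMono σ ∧ ∀ m n, m ≠ n → ‖⟪x (σ m), x (σ n)⟫_𝕜‖ ≤ ε m * ε n := by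
  obtain ⟨σ, hσ, hsmall⟩ := exists_strictMono_forall_lt_of_eventually
    (Q := fun n j k => ‖⟪x k, x j⟫_𝕜‖ < ε n * ε n) fun n j =>
      (by simpa using (hx (x j)).norm : Tendsto (fun k => ‖⟪x k, x j⟫_𝕜‖) atTop (𝓝 0))
        |>.eventually_lt_const (mul_pos (hε_pos n) (hε_pos n))
  have hlt : ∀ m n, m < n → ‖⟪x (σ m), x (σ n)⟫_𝕜‖ ≤ ε m * ε n := fun m n hmn => by
    rw [norm_inner_symm]
    exact (hsmall m n hmn).le.trans
      (mul_le_mul_of_nonneg_right (hε hmn.le) (hε_pos n).le)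
  refine ⟨σ, hσ, fun m n hmn => ?_⟩
  rcases hmn.lt_or_gt with h | h
  · exact hlt m n h
  · rw [norm_inner_symm, mul_comm]; exact hlt n m h

end InnerProductSpace

noncomputable def deBrangesKernel (E : ℂ → ℂ) (w z : ℂ) : ℂ :=
  (E z * conj (E w) - conj (E (conj z)) * E (conj w)) /
    (2 * (Real.pi : ℂ) * I * (conj w - z))

theorem norm_comp_conj_le_of_im_nonneg {E : ℂ → ℂ}
    (hHB : ∀ z : ℂ, 0 < z.im → ‖E (conj z)‖ < ‖E z‖) {z : ℂ} (hz : 0 ≤ z.im) :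
    ‖E (conj z)‖ ≤ ‖E z‖ := by
  rcases hz.eq_or_lt with h | h
  · rw [conj_eq_iff_im.mpr h.symm]
  · exact (hHB z h).le

theorem im_add_im_le_norm_sub_conj (u z : ℂ) : u.im + z.im ≤ ‖z - conj u‖ := by
  simpa [add_comm] using im_le_norm (z - conj u)

theorem norm_add_I_le_mul_norm_sub_conj {u z : ℂ} (hu : 0 < u.im) (hz : 0 ≤ z.im) :
    ‖z + I‖ ≤ (1 + ‖conj u + I‖ / u.im) * ‖z - conj u‖ := by
  have hd : u.im ≤ ‖z - conj u‖ := by linarith [im_add_im_le_norm_sub_conj u z]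
  have hfar : ‖conj u + I‖ ≤ ‖conj u + I‖ / u.im * ‖z - conj u‖ := by
    rw [div_mul_eq_mul_div, le_div_iff₀ hu]; gcongr
  calc ‖z + I‖ = ‖(z - conj u) + (conj u + I)‖ := by ring_nf
    _ ≤ ‖z - conj u‖ + ‖conj u + I‖ := norm_add_le _ _
    _ ≤ (1 + ‖conj u + I‖ / u.im) * ‖z - conj u‖ := by linarith

theorem norm_deBrangesKernel_numerator_le {E : ℂ → ℂ} {z : ℂ} (hz : ‖E (conj z)‖ ≤ ‖E z‖)
    (u : ℂ) :
    ‖E z * conj (E u) - conj (E (conj z)) * E (conj u)‖ ≤ ‖E z‖ * (‖E u‖ + ‖E (conj u)‖) := by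
  calc _ ≤ ‖E z * conj (E u)‖ + ‖conj (E (conj z)) * E (conj u)‖ := norm_sub_le _ _
    _ = ‖E z‖ * ‖E u‖ + ‖E (conj z)‖ * ‖E (conj u)‖ := by simp only [norm_mul, RCLike.norm_conj]
    _ ≤ ‖E z‖ * (‖E u‖ + ‖E (conj u)‖) := by rw [mul_add]; gcongr

theorem exists_norm_deBrangesKernel_le {E : ℂ → ℂ}
    (hE : ∀ z : ℂ, 0 ≤ z.im → ‖E (conj z)‖ ≤ ‖E z‖) {u : ℂ} (hu : 0 < u.im) :
    ∃ C, ∀ z : ℂ, 0 ≤ z.im → ‖deBrangesKernel E u z‖ ≤ C * (‖E z‖ / ‖z + I‖) := by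
  set B := ‖E u‖ + ‖E (conj u)‖
  set M := 1 + ‖conj u + I‖ / u.im
  refine ⟨B * M / (2 * Real.pi), fun z hz => ?_⟩
  have hd : 0 < ‖z - conj u‖ := by linarith [im_add_im_le_norm_sub_conj u z]
  have hzI : 0 < ‖z + I‖ := norm_pos_iff.mpr fun h => by
    have := congrArg im h
    simp only [add_im, I_im, zero_im] at this
    linarith
  have hM : 0 < M := by positivity
  calc ‖deBrangesKernel E u z‖
      = ‖E z * conj (E u) - conj (E (conj z)) * E (conj u)‖ / (2 * Real.pi * ‖z - conj u‖) := by
        simp [deBrangesKernel, norm_sub_rev (conj u), abs_of_pos Real.pi_pos]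
    _ ≤ ‖E z‖ * B / (2 * Real.pi * ‖z - conj u‖) := by
        gcongr; exact norm_deBrangesKernel_numerator_le (hE z hz) u
    _ = B * M / (2 * Real.pi) * (‖E z‖ / (M * ‖z - conj u‖)) := by field_simp
    _ ≤ B * M / (2 * Real.pi) * (‖E z‖ / ‖z + I‖) := by
        gcongr; exact norm_add_I_le_mul_norm_sub_conj hu hz

section ReproducingKernel

variable {H : Type*} [NormedAddCommGroup H] [InnerProductSpace ℂ H] {ev : H →ₗ[ℂ] (ℂ → ℂ)}
  {K : ℂ → H}

theorem dense_span_kernel_image [CompleteSpace H] (hinj : Function.Injective ev)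
    (hentire : ∀ F : H, Differentiable ℂ (ev F))
    (hrepro : ∀ (F : H) (w : ℂ), ⟪K w, F⟫_ℂ = ev F w) {U : Set ℂ} (hU : IsOpen U)
    (hU_ne : U.Nonempty) :
    Dense (Submodule.span ℂ (K '' U) : Set H) := by
  rw [Submodule.dense_iff_topologicalClosure_eq_top, Submodule.topologicalClosure_eq_top_iff,
    Submodule.eq_bot_iff]
  intro F hF
  have hvanish : ∀ u ∈ U, ev F u = 0 := fun u hu => by
    rw [← hrepro]
    exact (Submodule.mem_orthogonal _ F).mp hF _ (Submodule.subset_span ⟨u, hu, rfl⟩)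
  obtain ⟨u₀, hu₀⟩ := hU_ne
  have hanalytic : AnalyticOnNhd ℂ (ev F) Set.univ :=
    (hentire F).differentiableOn.analyticOnNhd isOpen_univ
  have hzero : ev F = 0 := funext fun z =>
    hanalytic.eqOn_zero_of_preconnected_of_eventuallyEq_zero isPreconnected_univ
      (Set.mem_univ u₀) (eventually_of_mem (hU.mem_nhds hu₀) hvanish) (Set.mem_univ z)
  exact hinj (by rw [hzero, map_zero])

theorem tendsto_inner_normalized_kernel
    (hrepro : ∀ (F : H) (w : ℂ), ⟪K w, F⟫_ℂ = ev F w) {E : ℂ → ℂ}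
    (hE : ∀ z : ℂ, 0 ≤ z.im → ‖E (conj z)‖ ≤ ‖E z‖)
    (hKform : ∀ w z : ℂ, z ≠ conj w → ev (K w) z = deBrangesKernel E w z)
    {w : ℕ → ℂ} (hw : ∀ k, 0 ≤ (w k).im)
    (hlim : Tendsto (fun k => (‖E (w k)‖ / ‖w k + I‖) / ‖K (w k)‖) atTop (𝓝 0))
    {u : ℂ} (hu : 0 < u.im) :
    Tendsto (fun k => ⟪(‖K (w k)‖ : ℂ)⁻¹ • K (w k), K u⟫_ℂ) atTop (𝓝 0) := by
  obtain ⟨C, hC⟩ := exists_norm_deBrangesKernel_le hE hu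
  refine squeeze_zero_norm (fun k => ?_) (by simpa using hlim.const_mul C)
  have hne : w k ≠ conj u := fun h => by
    have := congrArg im h
    simp only [conj_im] at this
    linarith [hw k]
  rw [inner_smul_left, hrepro, hKform u (w k) hne, norm_mul, map_inv₀, conj_ofReal, norm_inv,
    norm_real, norm_norm]
  calc _ ≤ ‖K (w k)‖⁻¹ * (C * (‖E (w k)‖ / ‖w k + I‖)) := by gcongr; exact hC (w k) (hw k)
    _ = C * ((‖E (w k)‖ / ‖w k + I‖) / ‖K (w k)‖) := by ring

end ReproducingKernel

theorem riesz_sequence_of_kernels_general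
    {H : Type*} [NormedAddCommGroup H] [InnerProductSpace ℂ H] [CompleteSpace H]
    (ev : H →ₗ[ℂ] (ℂ → ℂ)) (hinj : Function.Injective ev)
    (hentire : ∀ F : H, Differentiable ℂ (ev F))
    (E : ℂ → ℂ)
    (hHB : ∀ z : ℂ, 0 < z.im → ‖E ((starRingEnd ℂ) z)‖ < ‖E z‖)
    (K : ℂ → H)
    (hKform : ∀ w z : ℂ, z ≠ (starRingEnd ℂ) w →
      ev (K w) z = (E z * (starRingEnd ℂ) (E w) -
          (starRingEnd ℂ) (E ((starRingEnd ℂ) z)) * E ((starRingEnd ℂ) w)) /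
        (2 * (Real.pi : ℂ) * Complex.I * ((starRingEnd ℂ) w - z)))
    (hrepro : ∀ (F : H) (w : ℂ), ⟪K w, F⟫_ℂ = ev F w)
    (w : ℕ → ℂ) (hw : ∀ k, 0 ≤ (w k).im)
    (hpos : ∀ k, 0 < ‖K (w k)‖)
    (hlim : Filter.Tendsto
      (fun k => (‖E (w k)‖ / ‖w k + Complex.I‖) / ‖K (w k)‖)
      Filter.atTop (nhds 0)) :
    ∃ σ : ℕ → ℕ, StrictMono σ ∧ ∃ c C : ℝ, 0 < c ∧ c ≤ C ∧
      ∀ (s : Finset ℕ) (a : ℕ → ℂ),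
        c * ∑ n ∈ s, ‖a n‖ ^ 2 ≤
            ‖∑ n ∈ s, a n • ((‖K (w (σ n))‖ : ℂ)⁻¹ • K (w (σ n)))‖ ^ 2 ∧
          ‖∑ n ∈ s, a n • ((‖K (w (σ n))‖ : ℂ)⁻¹ • K (w (σ n)))‖ ^ 2 ≤
            C * ∑ n ∈ s, ‖a n‖ ^ 2 := by
  set k : ℕ → H := fun n => (‖K (w n)‖ : ℂ)⁻¹ • K (w n)
  have hk_norm : ∀ n, ‖k n‖ = 1 := fun n => norm_smul_inv_norm (norm_pos_iff.mp (hpos n))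
  have hdense := dense_span_kernel_image hinj hentire hrepro (U := {z : ℂ | 0 < z.im})
    (isOpen_lt continuous_const continuous_im) ⟨I, by simp⟩
  have hk_weak : ∀ y, Tendsto (fun n => ⟪k n, y⟫_ℂ) atTop (𝓝 0) := by
    refine tendsto_inner_of_dense_span (fun n => (hk_norm n).le) hdense ?_
    rintro _ ⟨u, hu, rfl⟩
    exact tendsto_inner_normalized_kernel hrepro (fun _ => norm_comp_conj_le_of_im_nonneg hHB)
      hKform hw hlim hu
  obtain ⟨σ, hσ, hk_orth⟩ := exists_strictMono_norm_inner_le_mul hk_weak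
    (ε := fun n => ((1 : ℝ) / 2) ^ (n + 1))
    (fun m n hmn => pow_le_pow_of_le_one (by norm_num) (by norm_num) (by omega))
    (fun n => by positivity)
  refine ⟨σ, hσ, 2 / 3, 4 / 3, by norm_num, by norm_num, fun s a => ?_⟩
  have hdev := abs_norm_sq_sum_smul_sub_le (fun n => hk_norm (σ n)) hk_orth s a
  have hS : 0 ≤ ∑ n ∈ s, ‖a n‖ ^ 2 := by positivity
  have hgeom := mul_le_mul_of_nonneg_left (sum_sq_half_pow_succ_le s) hS
  rw [abs_le] at hdev
  constructor <;> linarith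

/-- **Statement 11.** If `m_E(w_k)/∇(w_k) → 0`, then some subsequence of the normalized
reproducing kernels is a Riesz sequence in `H`. -/
theorem riesz_sequence_of_kernels
    {H : Type*} [NormedAddCommGroup H] [InnerProductSpace ℂ H] [CompleteSpace H]
    (ev : H →ₗ[ℂ] (ℂ → ℂ)) (hinj : Function.Injective ev)
    (hentire : ∀ F : H, Differentiable ℂ (ev F))
    (E : ℂ → ℂ) (hE : Differentiable ℂ E)
    (hHB : ∀ z : ℂ, 0 < z.im → ‖E ((starRingEnd ℂ) z)‖ < ‖E z‖)
    (K : ℂ → H)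
    (hKform : ∀ w z : ℂ, z ≠ (starRingEnd ℂ) w →
      ev (K w) z = (E z * (starRingEnd ℂ) (E w) -
          (starRingEnd ℂ) (E ((starRingEnd ℂ) z)) * E ((starRingEnd ℂ) w)) /
        (2 * (Real.pi : ℂ) * Complex.I * ((starRingEnd ℂ) w - z)))
    (hrepro : ∀ (F : H) (w : ℂ), ⟪K w, F⟫_ℂ = ev F w)
    (w : ℕ → ℂ) (hw : ∀ k, 0 ≤ (w k).im)
    (hpos : ∀ k, 0 < ‖K (w k)‖)
    (hlim : Filter.Tendsto
      (fun k => (‖E (w k)‖ / ‖w k + Complex.I‖) / ‖K (w k)‖)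
      Filter.atTop (nhds 0)) :
    ∃ σ : ℕ → ℕ, StrictMono σ ∧ ∃ c C : ℝ, 0 < c ∧ c ≤ C ∧
      ∀ (s : Finset ℕ) (a : ℕ → ℂ),
        c * ∑ n ∈ s, ‖a n‖ ^ 2 ≤
            ‖∑ n ∈ s, a n • ((‖K (w (σ n))‖ : ℂ)⁻¹ • K (w (σ n)))‖ ^ 2 ∧
          ‖∑ n ∈ s, a n • ((‖K (w (σ n))‖ : ℂ)⁻¹ • K (w (σ n)))‖ ^ 2 ≤
            C * ∑ n ∈ s, ‖a n‖ ^ 2 :=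
  riesz_sequence_of_kernels_general ev hinj hentire E hHB K hKform hrepro w hw hpos hlim
end
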